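/- arXiv:1607.04709 — 3 statements merged into one kernel-verified Lean document; each statement's English description precedes it below -/
import Mathlib

section
/- Assume (F1), (F2) and (L). Fix z ∈ Ω̄ and a sequence {λ_j} ⊂ [0,∞), and let {μ_j} be measures with μ_j ∈ P^S ∩ G^S(z,λ_j)' for all j. Assume that for some ρ ∈ ℝ and λ ∈ [0,∞), ⟨μ_j, L⟩ → ρ and λ_j → λ as j → ∞. Then there exist a measure ν ∈ P^S ∩ G^S(z,λ)' and a subsequence {μ_{j_k}} of {μ_j} such that ⟨ν, L⟩ = ρ and ⟨μ_{j_k}, ψ⟩ → ⟨ν, ψ⟩ for every ψ ∈ C(Ω̄) (regarded as the function (x,α) ↦ ψ(x) on Ω̄×A). -/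
open MeasureTheory Filter Topology Set

noncomputable section

/-- Points of `ℝⁿ`. -/
abbrev EucV (n : ℕ) := Fin n → ℝ

/-- Fully nonlinear operators `F = F(x, p, X)` on `ℝⁿ × ℝⁿ × Sⁿ`. -/
abbrev Op (n : ℕ) := EucV n → EucV n → Matrix (Fin n) (Fin n) ℝ → ℝ

/-- The gradient vector `Dϕ(x)` of a test function. -/
def gradV {n : ℕ} (ϕ : EucV n → ℝ) (x : EucV n) : EucV n :=
  fun i => fderiv ℝ ϕ x (Pi.single i 1)

/-- The Hessian matrix `D²ϕ(x)` of a test function. -/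
def hessM {n : ℕ} (ϕ : EucV n → ℝ) (x : EucV n) : Matrix (Fin n) (Fin n) ℝ :=
  Matrix.of fun i j => fderiv ℝ (fun y => fderiv ℝ ϕ y (Pi.single j (1 : ℝ))) x (Pi.single i 1)

/-- `u` is a viscosity subsolution of `lam * u + G[u] = c` at every point of `S`,
with test maxima taken relative to `D`. -/
def SubsolOn {n : ℕ} (D S : Set (EucV n)) (lam : ℝ) (G : Op n) (c : EucV n → ℝ)
    (u : EucV n → ℝ) : Prop :=
  ∀ ϕ : EucV n → ℝ, ContDiff ℝ 2 ϕ → ∀ x ∈ S,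
    IsLocalMaxOn (fun y => u y - ϕ y) D x →
      lam * u x + G x (gradV ϕ x) (hessM ϕ x) ≤ c x

/-- `u` is a viscosity supersolution of `lam * u + G[u] = c` at every point of `S`,
with test minima taken relative to `D`. -/
def SupersolOn {n : ℕ} (D S : Set (EucV n)) (lam : ℝ) (G : Op n) (c : EucV n → ℝ)
    (u : EucV n → ℝ) : Prop :=
  ∀ ϕ : EucV n → ℝ, ContDiff ℝ 2 ϕ → ∀ x ∈ S,
    IsLocalMinOn (fun y => u y - ϕ y) D x →
      c x ≤ lam * u x + G x (gradV ϕ x) (hessM ϕ x)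

/-- The operator `F_φ` for `φ = t·L + χ ∈ Φ⁺`, namely
`F_φ(x,p,X) = t·F(x, t⁻¹p, t⁻¹X) − χ(x)`. -/
def Fphi {n : ℕ} (F : Op n) (t : ℝ) (χ : EucV n → ℝ) : Op n :=
  fun x p X => t * F x (t⁻¹ • p) (t⁻¹ • X) - χ x

/-- `Ω` is a bounded domain: open, connected and bounded. -/
def BoundedDomain {n : ℕ} (Ω : Set (EucV n)) : Prop :=
  IsOpen Ω ∧ IsConnected Ω ∧ Bornology.IsBounded Ω

/-- Solution of the state constraint problem (S_lam):
subsolution of `lam u + F[u] = 0` in `Ω`, supersolution on `Ω̄`. -/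
def SolS {n : ℕ} (Ω : Set (EucV n)) (F : Op n) (lam : ℝ) (v : EucV n → ℝ) : Prop :=
  SubsolOn (closure Ω) Ω lam F (fun _ => 0) v ∧
    SupersolOn (closure Ω) (closure Ω) lam F (fun _ => 0) v

/-- Solution of the state constraint ergodic problem (ES_c). -/
def SolES {n : ℕ} (Ω : Set (EucV n)) (F : Op n) (c : ℝ) (u : EucV n → ℝ) : Prop :=
  SubsolOn (closure Ω) Ω 0 F (fun _ => c) u ∧
    SupersolOn (closure Ω) (closure Ω) 0 F (fun _ => c) u

/-- (CPS): comparison principle for the state constraint problem. -/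
def CondCPS {n : ℕ} (Ω : Set (EucV n)) (F : Op n) : Prop :=
  ∀ lam : ℝ, 0 < lam → ∀ v w : EucV n → ℝ,
    ContinuousOn v (closure Ω) → ContinuousOn w (closure Ω) →
      SubsolOn (closure Ω) Ω lam F (fun _ => 0) v →
        SupersolOn (closure Ω) (closure Ω) lam F (fun _ => 0) w →
          ∀ x ∈ closure Ω, v x ≤ w x

/-- (SLS): `vfam lam` is, for each `lam > 0`, a (continuous) solution of (S_lam). -/
def CondSLS {n : ℕ} (Ω : Set (EucV n)) (F : Op n) (vfam : ℝ → EucV n → ℝ) : Prop :=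
  ∀ lam : ℝ, 0 < lam → ContinuousOn (vfam lam) (closure Ω) ∧ SolS Ω F lam (vfam lam)

/-- (EC): the family `{vfam lam}_{lam>0}` is equicontinuous on `Ω̄`. -/
def CondEC {n : ℕ} (Ω : Set (EucV n)) (vfam : ℝ → EucV n → ℝ) : Prop :=
  ∀ ε : ℝ, 0 < ε → ∃ δ : ℝ, 0 < δ ∧ ∀ lam : ℝ, 0 < lam →
    ∀ x ∈ closure Ω, ∀ y ∈ closure Ω, dist x y < δ → |vfam lam x - vfam lam y| < ε

/-- (CP_loc): local comparison principle for `lam u + F_φ[u] = 0`, `φ ∈ Φ⁺`. -/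
def CondCPloc {n : ℕ} (Ω : Set (EucV n)) (F : Op n) : Prop :=
  ∀ lam : ℝ, 0 < lam → ∀ t : ℝ, 0 < t → ∀ χ : EucV n → ℝ, ContinuousOn χ (closure Ω) →
    ∀ U : Set (EucV n), IsOpen U → U ⊆ Ω →
      ∀ v w : EucV n → ℝ, ContinuousOn v (closure U) → ContinuousOn w (closure U) →
        SubsolOn (closure U) U lam (Fphi F t χ) (fun _ => 0) v →
          SupersolOn (closure U) U lam (Fphi F t χ) (fun _ => 0) w →
            (∀ x ∈ frontier U, v x ≤ w x) → ∀ x ∈ closure U, v x ≤ w x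

/-- Subsolution of the Dirichlet problem `lam u + G[u] = χ` in `Ω`, `u = ψ` on `∂Ω`. -/
def DSubsol {n : ℕ} (Ω : Set (EucV n)) (G : Op n) (lam : ℝ) (χ ψ u : EucV n → ℝ) : Prop :=
  SubsolOn (closure Ω) Ω lam G χ u ∧ ∀ x ∈ frontier Ω, u x ≤ ψ x

/-- Supersolution of the Dirichlet problem `lam u + G[u] = χ` in `Ω`, `u = ψ` on `∂Ω`
(in the generalized viscosity sense at the boundary). -/
def DSupersol {n : ℕ} (Ω : Set (EucV n)) (G : Op n) (lam : ℝ) (χ ψ w : EucV n → ℝ) : Prop :=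
  ∀ ϕ : EucV n → ℝ, ContDiff ℝ 2 ϕ → ∀ x ∈ closure Ω,
    IsLocalMinOn (fun y => w y - ϕ y) (closure Ω) x →
      (x ∈ Ω → χ x ≤ lam * w x + G x (gradV ϕ x) (hessM ϕ x)) ∧
      (x ∈ frontier Ω → χ x ≤ lam * w x + G x (gradV ϕ x) (hessM ϕ x) ∨ ψ x ≤ w x)

/-- Solution of the Dirichlet problem (D_lam). -/
def SolD {n : ℕ} (Ω : Set (EucV n)) (F : Op n) (g : EucV n → ℝ) (lam : ℝ)
    (v : EucV n → ℝ) : Prop :=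
  DSubsol Ω F lam (fun _ => 0) g v ∧ DSupersol Ω F lam (fun _ => 0) g v

/-- Solution of the ergodic Dirichlet problem (ED_c). -/
def SolED {n : ℕ} (Ω : Set (EucV n)) (F : Op n) (g : EucV n → ℝ) (c : ℝ)
    (u : EucV n → ℝ) : Prop :=
  DSubsol Ω F 0 (fun _ => c) g u ∧ DSupersol Ω F 0 (fun _ => c) g u

/-- (CPD): comparison principle for the Dirichlet problem
`lam u + F[u] = χ` in `Ω`, `u = ψ` on `∂Ω`. -/
def CondCPD {n : ℕ} (Ω : Set (EucV n)) (F : Op n) : Prop :=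
  ∀ lam : ℝ, 0 < lam → ∀ χ ψ : EucV n → ℝ, ContinuousOn χ (closure Ω) →
    ContinuousOn ψ (frontier Ω) →
      ∀ u w : EucV n → ℝ, ContinuousOn u (closure Ω) → ContinuousOn w (closure Ω) →
        DSubsol Ω F lam χ ψ u → DSupersol Ω F lam χ ψ w → ∀ x ∈ closure Ω, u x ≤ w x

/-- (SLD): `vfam lam` is, for each `lam > 0`, a (continuous) solution of (D_lam). -/
def CondSLD {n : ℕ} (Ω : Set (EucV n)) (F : Op n) (g : EucV n → ℝ)
    (vfam : ℝ → EucV n → ℝ) : Prop :=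
  ∀ lam : ℝ, 0 < lam → ContinuousOn (vfam lam) (closure Ω) ∧ SolD Ω F g lam (vfam lam)

/-- Member of `F^D(λ)`: a triple `(φ, ψ, u)` with `φ = t·L + χ ∈ Φ⁺`,
`u` a subsolution of `(D_{λ,φ,ψ})`. -/
def memFD {n : ℕ} (Ω : Set (EucV n)) (F : Op n) (lam t : ℝ) (χ ψ u : EucV n → ℝ) : Prop :=
  0 < t ∧ ContinuousOn χ (closure Ω) ∧ ContinuousOn ψ (frontier Ω) ∧
    ContinuousOn u (closure Ω) ∧
    SubsolOn (closure Ω) Ω lam (Fphi F t χ) (fun _ => 0) u ∧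
    ∀ x ∈ frontier Ω, u x ≤ ψ x

/-- Member of `F^D(M,λ)`: additionally `(φ,ψ) ∈ Ψ⁺(M)`. -/
def memFDM {n : ℕ} (Ω : Set (EucV n)) (F : Op n) (M lam t : ℝ) (χ ψ u : EucV n → ℝ) : Prop :=
  memFD Ω F lam t χ ψ u ∧ (∀ x ∈ closure Ω, |χ x| < t * M) ∧
    ∀ x ∈ frontier Ω, |ψ x| < t * M

/-- Member of `F^S(λ)`: a pair `(φ, u)` with `φ = t·L + χ ∈ Φ⁺` and `u` a
subsolution of `λ u + F_φ[u] = 0` in `Ω`. -/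
def memFS {n : ℕ} (Ω : Set (EucV n)) (F : Op n) (lam t : ℝ) (χ u : EucV n → ℝ) : Prop :=
  0 < t ∧ ContinuousOn χ (closure Ω) ∧ ContinuousOn u (closure Ω) ∧
    SubsolOn (closure Ω) Ω lam (Fphi F t χ) (fun _ => 0) u

/-- Viscosity subsolution of the Neumann problem `lam u + G[u] = 0` in `Sint`,
`γ·Du = ψ` on `Sbb`, with test maxima relative to `D`. -/
def NSubsol {n : ℕ} (γ : EucV n → EucV n) (G : Op n) (lam : ℝ) (ψ u : EucV n → ℝ)
    (D Sint Sbb : Set (EucV n)) : Prop :=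
  ∀ ϕ : EucV n → ℝ, ContDiff ℝ 2 ϕ → ∀ x, IsLocalMaxOn (fun y => u y - ϕ y) D x →
    (x ∈ Sint → lam * u x + G x (gradV ϕ x) (hessM ϕ x) ≤ 0) ∧
    (x ∈ Sbb → lam * u x + G x (gradV ϕ x) (hessM ϕ x) ≤ 0 ∨
      dotProduct (γ x) (gradV ϕ x) ≤ ψ x)

/-- Viscosity supersolution of the Neumann problem. -/
def NSupersol {n : ℕ} (γ : EucV n → EucV n) (G : Op n) (lam : ℝ) (ψ w : EucV n → ℝ)
    (D Sint Sbb : Set (EucV n)) : Prop :=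
  ∀ ϕ : EucV n → ℝ, ContDiff ℝ 2 ϕ → ∀ x, IsLocalMinOn (fun y => w y - ϕ y) D x →
    (x ∈ Sint → 0 ≤ lam * w x + G x (gradV ϕ x) (hessM ϕ x)) ∧
    (x ∈ Sbb → 0 ≤ lam * w x + G x (gradV ϕ x) (hessM ϕ x) ∨
      ψ x ≤ dotProduct (γ x) (gradV ϕ x))

/-- Solution of the Neumann problem (N_lam). -/
def SolN {n : ℕ} (Ω : Set (EucV n)) (γ : EucV n → EucV n) (F : Op n) (g : EucV n → ℝ)
    (lam : ℝ) (v : EucV n → ℝ) : Prop :=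
  NSubsol γ F lam g v (closure Ω) Ω (frontier Ω) ∧
    NSupersol γ F lam g v (closure Ω) Ω (frontier Ω)

/-- Solution of the ergodic Neumann problem (EN_c). -/
def SolEN {n : ℕ} (Ω : Set (EucV n)) (γ : EucV n → EucV n) (F : Op n) (g : EucV n → ℝ)
    (c : ℝ) (u : EucV n → ℝ) : Prop :=
  NSubsol γ (fun x p X => F x p X - c) 0 g u (closure Ω) Ω (frontier Ω) ∧
    NSupersol γ (fun x p X => F x p X - c) 0 g u (closure Ω) Ω (frontier Ω)

/-- (OG): `Ω` has `C¹` boundary and `γ` is an oblique (outward) field on `∂Ω`: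
locally `Ω = {h < 0}`, `∂Ω = {h = 0}` for a `C¹` defining function `h` with
nonvanishing gradient (the outward normal direction), and `γ · Dh > 0`. -/
def CondOG {n : ℕ} (Ω : Set (EucV n)) (γ : EucV n → EucV n) : Prop :=
  ContinuousOn γ (frontier Ω) ∧
  ∀ x ∈ frontier Ω, ∃ (U : Set (EucV n)) (h : EucV n → ℝ), IsOpen U ∧ x ∈ U ∧
    ContDiff ℝ 1 h ∧ (∀ y ∈ U, (y ∈ Ω ↔ h y < 0)) ∧
    (∀ y ∈ U, (y ∈ frontier Ω ↔ h y = 0)) ∧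
    ∀ y ∈ U ∩ frontier Ω, gradV h y ≠ 0 ∧ 0 < dotProduct (γ y) (gradV h y)

/-- (CPN_loc): localized comparison principle for the Neumann problem with data in `Ψ⁺`. -/
def CondCPNloc {n : ℕ} (Ω : Set (EucV n)) (γ : EucV n → EucV n) (F : Op n) : Prop :=
  ∀ lam : ℝ, 0 < lam → ∀ t : ℝ, 0 < t → ∀ χ ψ : EucV n → ℝ,
    ContinuousOn χ (closure Ω) → ContinuousOn ψ (frontier Ω) →
      ∀ W : Set (EucV n), IsOpen W →
        ∀ v w : EucV n → ℝ,
          ContinuousOn v (closure (W ∩ closure Ω)) →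
          ContinuousOn w (closure (W ∩ closure Ω)) →
          NSubsol γ (Fphi F t χ) lam ψ v (closure (W ∩ closure Ω)) (W ∩ Ω) (W ∩ frontier Ω) →
          NSupersol γ (Fphi F t χ) lam ψ w (closure (W ∩ closure Ω)) (W ∩ Ω) (W ∩ frontier Ω) →
          (∀ x ∈ Ω ∩ frontier (W ∩ closure Ω), v x ≤ w x) →
          ∀ x ∈ closure (W ∩ closure Ω), v x ≤ w x

/-- Member of `F^N(λ)`: a triple `(φ, ψ, u)` with `φ = t·L + χ ∈ Φ⁺` and `u` a
subsolution of the Neumann problem `(N_{λ,φ,ψ})`. -/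
def memFN {n : ℕ} (Ω : Set (EucV n)) (γ : EucV n → EucV n) (F : Op n) (lam t : ℝ)
    (χ ψ u : EucV n → ℝ) : Prop :=
  0 < t ∧ ContinuousOn χ (closure Ω) ∧ ContinuousOn ψ (frontier Ω) ∧
    ContinuousOn u (closure Ω) ∧
    NSubsol γ (Fphi F t χ) lam ψ u (closure Ω) Ω (frontier Ω)

/-- (SLN): `vfam lam` is, for each `lam > 0`, a (continuous) solution of (N_lam). -/
def CondSLN {n : ℕ} (Ω : Set (EucV n)) (γ : EucV n → EucV n) (F : Op n) (g : EucV n → ℝ)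
    (vfam : ℝ → EucV n → ℝ) : Prop :=
  ∀ lam : ℝ, 0 < lam → ContinuousOn (vfam lam) (closure Ω) ∧ SolN Ω γ F g lam (vfam lam)

section withA

variable {n : ℕ} {A : Type*} [MetricSpace A]

/-- (F1): `F` is the Bellman sup of the linear operators with data `a, b, L`. -/
def CondF1 (Ω : Set (EucV n)) (a : EucV n → A → Matrix (Fin n) (Fin n) ℝ)
    (b : EucV n → A → EucV n) (L : EucV n → A → ℝ) (F : Op n) : Prop :=
  ∀ x ∈ closure Ω, ∀ (p : EucV n) (X : Matrix (Fin n) (Fin n) ℝ),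
    IsLUB (Set.range fun α : A =>
      -Matrix.trace (a x α * X) - dotProduct (b x α) p - L x α) (F x p X)

/-- (F2): `F` is continuous on `Ω̄ × ℝⁿ × Sⁿ`. -/
def CondF2 (Ω : Set (EucV n)) (F : Op n) : Prop :=
  ContinuousOn (fun q : EucV n × EucV n × Matrix (Fin n) (Fin n) ℝ => F q.1 q.2.1 q.2.2)
    ((closure Ω) ×ˢ (Set.univ : Set (EucV n × Matrix (Fin n) (Fin n) ℝ)))

/-- The data `a, b, L` are continuous on `Ω̄ × A` and `a` is nonnegative-definite. -/
def CondData (Ω : Set (EucV n)) (a : EucV n → A → Matrix (Fin n) (Fin n) ℝ)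
    (b : EucV n → A → EucV n) (L : EucV n → A → ℝ) : Prop :=
  ContinuousOn (fun q : EucV n × A => a q.1 q.2) ((closure Ω) ×ˢ (Set.univ : Set A)) ∧
  ContinuousOn (fun q : EucV n × A => b q.1 q.2) ((closure Ω) ×ˢ (Set.univ : Set A)) ∧
  ContinuousOn (fun q : EucV n × A => L q.1 q.2) ((closure Ω) ×ˢ (Set.univ : Set A)) ∧
  ∀ x ∈ closure Ω, ∀ α : A, (a x α).PosSemidef

/-- (L): the running cost `L` is coercive (`L = +∞` at infinity). -/
def CondL (Ω : Set (EucV n)) (L : EucV n → A → ℝ) : Prop :=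
  ∀ M : ℝ, ∃ K : Set A, IsCompact K ∧ ∀ x ∈ closure Ω, ∀ α ∉ K, M ≤ L x α

variable [MeasurableSpace A]

/-- The measure `μ` on `ℝⁿ × A` is carried by `Ω̄ × A`. -/
def SuppInBar (Ω : Set (EucV n)) (μ : Measure (EucV n × A)) : Prop :=
  μ ((closure Ω ×ˢ (Set.univ : Set A))ᶜ) = 0

/-- The pairing `⟨μ, L⟩`. -/
def intL (L : EucV n → A → ℝ) (μ : Measure (EucV n × A)) : ℝ :=
  ∫ q : EucV n × A, L q.1 q.2 ∂μ

/-- `P^S`: Radon probability measures on `Ω̄ × A`. -/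
def PSset (Ω : Set (EucV n)) : Set (Measure (EucV n × A)) :=
  {μ | IsProbabilityMeasure μ ∧ SuppInBar Ω μ}

/-- `G^S(z,λ)'`: the dual cone of `G^S(z,λ)` in `R_L`. -/
def GSdual (Ω : Set (EucV n)) (L : EucV n → A → ℝ) (F : Op n) (z : EucV n) (lam : ℝ) :
    Set (Measure (EucV n × A)) :=
  {μ | Integrable (fun q : EucV n × A => L q.1 q.2) μ ∧
    ∀ (t : ℝ) (χ u : EucV n → ℝ), memFS Ω F lam t χ u →
      0 ≤ ∫ q : EucV n × A, (t * L q.1 q.2 + χ q.1 - lam * u z) ∂μ}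

/-- `P^D`: pairs `(μ₁, μ₂)` of nonnegative Radon measures on `Ω̄ × A` (integrating `L`)
and on `∂Ω`, with total mass one. -/
def PDset (Ω : Set (EucV n)) (L : EucV n → A → ℝ) :
    Set (Measure (EucV n × A) × Measure (EucV n)) :=
  {p | SuppInBar Ω p.1 ∧ Integrable (fun q : EucV n × A => L q.1 q.2) p.1 ∧
    p.2 ((frontier Ω)ᶜ) = 0 ∧ p.1 Set.univ + p.2 Set.univ = 1}

/-- `G^D(z,λ)'`: the dual cone of `G^D(z,λ)`. -/
def GDdual (Ω : Set (EucV n)) (L : EucV n → A → ℝ) (F : Op n) (z : EucV n) (lam : ℝ) :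
    Set (Measure (EucV n × A) × Measure (EucV n)) :=
  {p | Integrable (fun q : EucV n × A => L q.1 q.2) p.1 ∧
    ∀ (t : ℝ) (χ ψ u : EucV n → ℝ), memFD Ω F lam t χ ψ u →
      0 ≤ (∫ w : EucV n × A, (t * L w.1 w.2 + χ w.1 - lam * u z) ∂p.1) +
        ∫ x, lam * (ψ x - u z) ∂p.2}

/-- `G^D(M,z,λ)'`: the dual cone of `G^D(M,z,λ)`. -/
def GDdualM (Ω : Set (EucV n)) (L : EucV n → A → ℝ) (F : Op n) (M : ℝ) (z : EucV n)
    (lam : ℝ) : Set (Measure (EucV n × A) × Measure (EucV n)) :=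
  {p | Integrable (fun q : EucV n × A => L q.1 q.2) p.1 ∧
    ∀ (t : ℝ) (χ ψ u : EucV n → ℝ), memFDM Ω F M lam t χ ψ u →
      0 ≤ (∫ w : EucV n × A, (t * L w.1 w.2 + χ w.1 - lam * u z) ∂p.1) +
        ∫ x, lam * (ψ x - u z) ∂p.2}

/-- `G^D(z,λ)†`: triples `(ρ, μ₁, μ₂)` with `(μ₁,μ₂) ∈ P^D` and
`0 ≤ tρ + ⟨μ₁, tL+χ−λu(z)⟩ + λ⟨μ₂, ψ−u(z)⟩` for all `(tL+χ, ψ, u) ∈ F^D(λ)`. -/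
def GDdag (Ω : Set (EucV n)) (L : EucV n → A → ℝ) (F : Op n) (z : EucV n) (lam : ℝ) :
    Set (ℝ × Measure (EucV n × A) × Measure (EucV n)) :=
  {q | 0 ≤ q.1 ∧ (q.2.1, q.2.2) ∈ PDset Ω L ∧
    ∀ (t : ℝ) (χ ψ u : EucV n → ℝ), memFD Ω F lam t χ ψ u →
      0 ≤ t * q.1 + (∫ w : EucV n × A, (t * L w.1 w.2 + χ w.1 - lam * u z) ∂q.2.1) +
        lam * ∫ x, (ψ x - u z) ∂q.2.2}

/-- `G^D(M,z,λ)†`. -/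
def GDdagM (Ω : Set (EucV n)) (L : EucV n → A → ℝ) (F : Op n) (M : ℝ) (z : EucV n)
    (lam : ℝ) : Set (ℝ × Measure (EucV n × A) × Measure (EucV n)) :=
  {q | 0 ≤ q.1 ∧ (q.2.1, q.2.2) ∈ PDset Ω L ∧
    ∀ (t : ℝ) (χ ψ u : EucV n → ℝ), memFDM Ω F M lam t χ ψ u →
      0 ≤ t * q.1 + (∫ w : EucV n × A, (t * L w.1 w.2 + χ w.1 - lam * u z) ∂q.2.1) +
        lam * ∫ x, (ψ x - u z) ∂q.2.2}

/-- `P₁^D`: first marginals of elements of `P^D ∩ G^D(0)'`. -/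
def P1Dset (Ω : Set (EucV n)) (L : EucV n → A → ℝ) (F : Op n) :
    Set (Measure (EucV n × A)) :=
  {μ₁ | ∃ μ₂ : Measure (EucV n), (μ₁, μ₂) ∈ PDset Ω L ∧ (μ₁, μ₂) ∈ GDdual Ω L F 0 0}

/-- Weak convergence of pairs of measures, tested against `C_c(Ω̄ × A) × C(∂Ω)`. -/
def WeakConvD (Ω : Set (EucV n)) (ps : ℕ → Measure (EucV n × A) × Measure (EucV n))
    (p : Measure (EucV n × A) × Measure (EucV n)) : Prop :=
  ∀ φ : EucV n × A → ℝ, Continuous φ → HasCompactSupport φ →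
    ∀ ψ : EucV n → ℝ, ContinuousOn ψ (frontier Ω) →
      Tendsto (fun k => (∫ q, φ q ∂(ps k).1) + ∫ x, ψ x ∂(ps k).2) atTop
        (𝓝 ((∫ q, φ q ∂p.1) + ∫ x, ψ x ∂p.2))

/-- `P^N`: pairs of a Radon probability measure on `Ω̄ × A` integrating `L` and a
nonnegative Radon measure on `∂Ω`. -/
def PNset (Ω : Set (EucV n)) (L : EucV n → A → ℝ) :
    Set (Measure (EucV n × A) × Measure (EucV n)) :=
  {p | IsProbabilityMeasure p.1 ∧ SuppInBar Ω p.1 ∧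
    Integrable (fun q : EucV n × A => L q.1 q.2) p.1 ∧
    IsFiniteMeasure p.2 ∧ p.2 ((frontier Ω)ᶜ) = 0}

/-- `G^N(z,λ)'`: the dual cone of `G^N(z,λ)`. -/
def GNdual (Ω : Set (EucV n)) (γ : EucV n → EucV n) (L : EucV n → A → ℝ) (F : Op n)
    (z : EucV n) (lam : ℝ) : Set (Measure (EucV n × A) × Measure (EucV n)) :=
  {p | Integrable (fun q : EucV n × A => L q.1 q.2) p.1 ∧
    ∀ (t : ℝ) (χ ψ u : EucV n → ℝ), memFN Ω γ F lam t χ ψ u →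
      0 ≤ (∫ w : EucV n × A, (t * L w.1 w.2 + χ w.1 - lam * u z) ∂p.1) + ∫ x, ψ x ∂p.2}

end withA

end

namespace SCaux

open Classical in
noncomputable def pick (d : ℕ → ℝ) (K : ℕ) (r : ℝ) : ℕ :=
  Nat.findGreatest (fun m => ∑ i ∈ Finset.range m, d i ≤ r) K

open Classical in
lemma pick_spec {d : ℕ → ℝ} {K : ℕ} {r : ℝ} (h0 : 0 ≤ r)
    (hr : r < ∑ i ∈ Finset.range K, d i) :
    pick d K r < K ∧ (∑ i ∈ Finset.range (pick d K r), d i) ≤ r ∧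
      r < ∑ i ∈ Finset.range (pick d K r + 1), d i := by
  classical
  have hP0 : (fun m => ∑ i ∈ Finset.range m, d i ≤ r) 0 := by simp [h0]
  have hspec := Nat.findGreatest_spec (P := fun m => ∑ i ∈ Finset.range m, d i ≤ r)
    (Nat.zero_le K) hP0
  have hle : pick d K r ≤ K := Nat.findGreatest_le K
  have hne : pick d K r ≠ K := by
    intro h
    unfold pick at h
    rw [h] at hspec
    exact absurd hspec (not_le.mpr hr)
  have hlt : pick d K r < K := lt_of_le_of_ne hle hne
  refine ⟨hlt, hspec, ?_⟩
  have := Nat.findGreatest_is_greatest (P := fun m => ∑ i ∈ Finset.range m, d i ≤ r)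
    (Nat.lt_succ_self (pick d K r)) (Nat.succ_le_of_lt hlt)
  exact not_le.mp this

/-- Branch index at level `p` : a choice of a piece at each scale `q ≤ p`. -/
abbrev Gam (M : ℕ → ℕ) (p : ℕ) := ∀ q : Fin (p + 1), Fin (M q)

noncomputable def toFinM {K : ℕ} (hK : 0 < K) (i : ℕ) : Fin K := ⟨i % K, Nat.mod_lt _ hK⟩

lemma toFinM_val {K : ℕ} (hK : 0 < K) {i : ℕ} (hi : i < K) : ((toFinM hK i : Fin K) : ℕ) = i :=
  Nat.mod_eq_of_lt hi

lemma toFinM_self {K : ℕ} (hK : 0 < K) (m : Fin K) : toFinM hK (m : ℕ) = m := by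
  apply Fin.ext
  exact toFinM_val hK m.isLt

variable (M : ℕ → ℕ)

/-- The constant branch at level 0. -/
def constGam (m : Fin (M 0)) : Gam M 0 := fun q =>
  Fin.cast (congrArg M (Fin.val_eq_zero q).symm) m

lemma constGam_zero (m : Fin (M 0)) : constGam M m 0 = m := by
  apply Fin.ext; rfl

lemma gam0_eq_constGam (γ : Gam M 0) : γ = constGam M (γ 0) := by
  funext q
  have hq : q = 0 := by omega
  subst hq
  apply Fin.ext; rfl

/-- Equivalence between `Fin (M 0)` and level-0 branches. -/
noncomputable def gam0Equiv : Fin (M 0) ≃ Gam M 0 where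
  toFun := constGam M
  invFun γ := γ 0
  left_inv m := constGam_zero M m
  right_inv γ := (gam0_eq_constGam M γ).symm

lemma sum_gam0 (hM0 : 0 < M 0) (c : Gam M 0 → ℝ) :
    ∑ i ∈ Finset.range (M 0), c (constGam M (toFinM hM0 i)) = ∑ γ : Gam M 0, c γ := by
  rw [← Fin.sum_univ_eq_sum_range (fun i => c (constGam M (toFinM hM0 i))) (M 0)]
  exact Fintype.sum_equiv (gam0Equiv M) _ _ (fun m => by rw [toFinM_self]; rfl)

/-- Extension of a branch by one level. -/
noncomputable def ext1 {p : ℕ} (γ : Gam M p) (m : Fin (M (p + 1))) : Gam M (p + 1) :=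
  Fin.snoc (α := fun q : Fin (p + 2) => Fin (M q)) γ m

lemma ext1_castSucc {p : ℕ} (γ : Gam M p) (m : Fin (M (p + 1))) (q : Fin (p + 1)) :
    ext1 M γ m q.castSucc = γ q := by
  simp [ext1, Fin.snoc_castSucc]

lemma ext1_last {p : ℕ} (γ : Gam M p) (m : Fin (M (p + 1))) :
    ext1 M γ m (Fin.last (p + 1)) = m := by
  simp [ext1, Fin.snoc_last]

lemma init_ext1 {p : ℕ} (γ : Gam M p) (m : Fin (M (p + 1))) :
    Fin.init (ext1 M γ m) = γ := by
  simp [ext1, Fin.init_snoc]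

lemma ext1_init_self {p : ℕ} (γ : Gam M (p + 1)) :
    ext1 M (Fin.init γ) (γ (Fin.last (p + 1))) = γ := by
  simp [ext1, Fin.snoc_init_self]

lemma ext1_injective {p : ℕ} (γ : Gam M p) : Function.Injective (ext1 M γ) := by
  intro m m' h
  have := congrArg (fun δ => δ (Fin.last (p + 1))) h
  simpa [ext1_last] using this

/-- Equivalence between `Gam M (p+1)` and `Gam M p × Fin (M (p+1))`. -/
noncomputable def gamSuccEquiv (p : ℕ) : Gam M (p + 1) ≃ Gam M p × Fin (M (p + 1)) where
  toFun γ := (Fin.init γ, γ (Fin.last (p + 1)))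
  invFun x := ext1 M x.1 x.2
  left_inv γ := ext1_init_self M γ
  right_inv x := by
    ext1
    · exact init_ext1 M x.1 x.2
    · simp [ext1_last]

variable (hM : ∀ q, 0 < M q) (c : ∀ p, Gam M p → ℝ)

/-- Left endpoint of the interval attached to a branch. -/
noncomputable def ell : (p : ℕ) → Gam M p → ℝ
  | 0, γ => ∑ i ∈ Finset.range ((γ 0 : Fin (M 0)) : ℕ), c 0 (constGam M (toFinM (hM 0) i))
  | (p + 1), γ => ell p (Fin.init γ) +
      ∑ i ∈ Finset.range ((γ (Fin.last (p + 1)) : Fin (M (p + 1))) : ℕ),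
        c (p + 1) (ext1 M (Fin.init γ) (toFinM (hM (p + 1)) i))

lemma ell_zero (γ : Gam M 0) :
    ell M hM c 0 γ = ∑ i ∈ Finset.range ((γ 0 : Fin (M 0)) : ℕ),
      c 0 (constGam M (toFinM (hM 0) i)) := rfl

lemma ell_ext1 {p : ℕ} (γ : Gam M p) (m : Fin (M (p + 1))) :
    ell M hM c (p + 1) (ext1 M γ m) = ell M hM c p γ +
      ∑ i ∈ Finset.range (m : ℕ), c (p + 1) (ext1 M γ (toFinM (hM (p + 1)) i)) := by
  show ell M hM c p (Fin.init (ext1 M γ m)) + _ = _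
  rw [init_ext1, ext1_last]

/-- The branch of a point `s ∈ [0,1)`. -/
noncomputable def br : (p : ℕ) → ℝ → Gam M p
  | 0 => fun s => constGam M (toFinM (hM 0)
      (pick (fun i => c 0 (constGam M (toFinM (hM 0) i))) (M 0) s))
  | (p + 1) => fun s =>
      ext1 M (br p s) (toFinM (hM (p + 1))
        (pick (fun i => c (p + 1) (ext1 M (br p s) (toFinM (hM (p + 1)) i))) (M (p + 1))
          (s - ell M hM c p (br p s))))

lemma init_br (p : ℕ) (s : ℝ) : Fin.init (br M hM c (p + 1) s) = br M hM c p s := by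
  show Fin.init (ext1 M _ _) = _
  rw [init_ext1]

end SCaux

namespace SCaux2
open SCaux

variable {M : ℕ → ℕ} (hM : ∀ q, 0 < M q) {c : ∀ p, Gam M p → ℝ}
  (hc0 : ∀ p γ, 0 ≤ c p γ)
  (hctot : ∑ γ : Gam M 0, c 0 γ = 1)
  (hcchild : ∀ p (γ : Gam M p), c p γ = ∑ m : Fin (M (p + 1)), c (p + 1) (ext1 M γ m))

section

include hcchild in
lemma sum_children (p : ℕ) (γ : Gam M p) :
    ∑ i ∈ Finset.range (M (p + 1)), c (p + 1) (ext1 M γ (toFinM (hM (p + 1)) i)) = c p γ := by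
  rw [← Fin.sum_univ_eq_sum_range (fun i => c (p + 1) (ext1 M γ (toFinM (hM (p + 1)) i)))
    (M (p + 1)), hcchild p γ]
  exact Finset.sum_congr rfl (fun m _ => by rw [toFinM_self])

include hc0 hctot hcchild in
lemma br_invariant : ∀ (p : ℕ) {s : ℝ}, 0 ≤ s → s < 1 →
    ell M hM c p (br M hM c p s) ≤ s ∧
      s < ell M hM c p (br M hM c p s) + c p (br M hM c p s) := by
  intro p
  induction p with
  | zero =>
    intro s hs0 hs1
    set d : ℕ → ℝ := fun i => c 0 (constGam M (toFinM (hM 0) i)) with hd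
    have hsum : ∑ i ∈ Finset.range (M 0), d i = 1 := by
      rw [hd]; rw [sum_gam0 M (hM 0) (c 0)]; exact hctot
    have hspec := pick_spec (d := d) (K := M 0) (r := s) hs0 (by rw [hsum]; exact hs1)
    set m := pick d (M 0) s with hm
    have hbr : br M hM c 0 s = constGam M (toFinM (hM 0) m) := rfl
    have hval : ((br M hM c 0 s) 0 : ℕ) = m := by
      rw [hbr, constGam_zero]; exact toFinM_val (hM 0) hspec.1
    have hc : c 0 (br M hM c 0 s) = d m := by rw [hbr]
    constructor
    · rw [ell_zero, hval]; exact hspec.2.1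
    · rw [ell_zero, hval, hc]
      have := hspec.2.2
      rwa [Finset.sum_range_succ] at this
  | succ p ih =>
    intro s hs0 hs1
    obtain ⟨h1, h2⟩ := ih hs0 hs1
    set γ := br M hM c p s with hγ
    set d : ℕ → ℝ := fun i => c (p + 1) (ext1 M γ (toFinM (hM (p + 1)) i)) with hd
    have hsum : ∑ i ∈ Finset.range (M (p + 1)), d i = c p γ := sum_children hM hcchild p γ
    have hr0 : 0 ≤ s - ell M hM c p γ := by linarith
    have hrlt : s - ell M hM c p γ < ∑ i ∈ Finset.range (M (p + 1)), d i := by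
      rw [hsum]; linarith
    have hspec := pick_spec (d := d) hr0 hrlt
    set m := pick d (M (p + 1)) (s - ell M hM c p γ) with hm
    have hbr : br M hM c (p + 1) s = ext1 M γ (toFinM (hM (p + 1)) m) := rfl
    have hval : ((toFinM (hM (p + 1)) m : Fin (M (p + 1))) : ℕ) = m := toFinM_val _ hspec.1
    have hell : ell M hM c (p + 1) (br M hM c (p + 1) s) =
        ell M hM c p γ + ∑ i ∈ Finset.range m, d i := by
      rw [hbr, ell_ext1, hval]
    have hcc : c (p + 1) (br M hM c (p + 1) s) = d m := by rw [hbr]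
    constructor
    · rw [hell]; linarith [hspec.2.1]
    · rw [hell, hcc]
      have := hspec.2.2
      rw [Finset.sum_range_succ] at this
      linarith

include hc0 hcchild in
lemma nesting (p : ℕ) (γ : Gam M p) (m : Fin (M (p + 1))) :
    ell M hM c p γ ≤ ell M hM c (p + 1) (ext1 M γ m) ∧
      ell M hM c (p + 1) (ext1 M γ m) + c (p + 1) (ext1 M γ m) ≤
        ell M hM c p γ + c p γ := by
  rw [ell_ext1]
  constructor
  · have : 0 ≤ ∑ i ∈ Finset.range (m : ℕ), c (p + 1) (ext1 M γ (toFinM (hM (p + 1)) i)) :=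
      Finset.sum_nonneg (fun i _ => hc0 _ _)
    linarith
  · have key : (∑ i ∈ Finset.range ((m : ℕ) + 1),
        c (p + 1) (ext1 M γ (toFinM (hM (p + 1)) i))) ≤ c p γ := by
      rw [← sum_children hM hcchild p γ]
      exact Finset.sum_le_sum_of_subset_of_nonneg
        (Finset.range_subset_range.mpr m.isLt) (fun i _ _ => hc0 _ _)
    rw [Finset.sum_range_succ] at key
    have : c (p + 1) (ext1 M γ m) = c (p + 1) (ext1 M γ (toFinM (hM (p + 1)) (m : ℕ))) := by
      rw [toFinM_self]
    linarith [this ▸ key]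

lemma sibling_core {d : ℕ → ℝ} (hd : ∀ i, 0 ≤ d i) {i j : ℕ} (hij : i < j) {base s : ℝ}
    (h1 : s < base + (∑ t ∈ Finset.range (i + 1), d t))
    (h2 : base + (∑ t ∈ Finset.range j, d t) ≤ s) : False := by
  have : (∑ t ∈ Finset.range (i + 1), d t) ≤ ∑ t ∈ Finset.range j, d t :=
    Finset.sum_le_sum_of_subset_of_nonneg (Finset.range_subset_range.mpr hij) (fun t _ _ => hd t)
  linarith

include hc0 hcchild in
lemma interval_disjoint : ∀ (p : ℕ) (γ δ : Gam M p), γ ≠ δ → ∀ s : ℝ,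
    ell M hM c p γ ≤ s ∧ s < ell M hM c p γ + c p γ →
    ell M hM c p δ ≤ s ∧ s < ell M hM c p δ + c p δ → False := by
  intro p
  induction p with
  | zero =>
    intro γ δ hne s hγ hδ
    set d : ℕ → ℝ := fun i => c 0 (constGam M (toFinM (hM 0) i)) with hd
    have hdpos : ∀ i, 0 ≤ d i := fun i => hc0 _ _
    have key : ∀ η : Gam M 0, ell M hM c 0 η = ∑ t ∈ Finset.range ((η 0 : ℕ)), d t ∧
        c 0 η = d ((η 0 : ℕ)) := by
      intro η
      refine ⟨rfl, ?_⟩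
      have : constGam M (toFinM (hM 0) ((η 0 : ℕ))) = η := by
        rw [toFinM_self]; exact (gam0_eq_constGam M η).symm
      rw [hd]; simp only; rw [this]
    have hvne : ((γ 0 : ℕ)) ≠ ((δ 0 : ℕ)) := by
      intro h
      apply hne
      rw [gam0_eq_constGam M γ, gam0_eq_constGam M δ]
      exact congrArg _ (Fin.ext h)
    obtain ⟨hγ1, hγ2⟩ := key γ
    obtain ⟨hδ1, hδ2⟩ := key δ
    rcases lt_or_gt_of_ne hvne with h | h
    · refine sibling_core hdpos h (base := 0) (s := s) ?_ ?_
      · rw [Finset.sum_range_succ, ← hγ1, ← hγ2]; linarith [hγ.2]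
      · rw [← hδ1]; linarith [hδ.1]
    · refine sibling_core hdpos h (base := 0) (s := s) ?_ ?_
      · rw [Finset.sum_range_succ, ← hδ1, ← hδ2]; linarith [hδ.2]
      · rw [← hγ1]; linarith [hγ.1]
  | succ p ih =>
    intro γ δ hne s hγ hδ
    by_cases hinit : Fin.init γ = Fin.init δ
    · -- siblings
      set γ₀ := Fin.init γ with hγ₀
      set d : ℕ → ℝ := fun i => c (p + 1) (ext1 M γ₀ (toFinM (hM (p + 1)) i)) with hd
      have hdpos : ∀ i, 0 ≤ d i := fun i => hc0 _ _
      have key : ∀ η : Gam M (p + 1), Fin.init η = γ₀ →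
          ell M hM c (p + 1) η = ell M hM c p γ₀ +
            ∑ t ∈ Finset.range ((η (Fin.last (p + 1)) : ℕ)), d t ∧
          c (p + 1) η = d ((η (Fin.last (p + 1)) : ℕ)) := by
        intro η hη
        constructor
        · have := ell_ext1 M hM c (Fin.init η) (η (Fin.last (p + 1)))
          rw [ext1_init_self] at this
          rw [this, hη]
        · have : ext1 M γ₀ (toFinM (hM (p + 1)) ((η (Fin.last (p + 1)) : ℕ))) = η := by
            rw [toFinM_self, ← hη, ext1_init_self]
          rw [hd]; simp only; rw [this]
      have hvne : ((γ (Fin.last (p + 1)) : ℕ)) ≠ ((δ (Fin.last (p + 1)) : ℕ)) := by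
        intro h
        apply hne
        rw [← ext1_init_self M γ, ← ext1_init_self M δ, ← hγ₀, hinit]
        exact congrArg _ (Fin.ext h)
      obtain ⟨hγ1, hγ2⟩ := key γ rfl
      obtain ⟨hδ1, hδ2⟩ := key δ (by rw [← hinit])
      rcases lt_or_gt_of_ne hvne with h | h
      · refine sibling_core hdpos h (base := ell M hM c p γ₀) (s := s) ?_ ?_
        · rw [Finset.sum_range_succ, ← hγ2]; linarith [hγ.2, hγ1]
        · linarith [hδ.1, hδ1]
      · refine sibling_core hdpos h (base := ell M hM c p γ₀) (s := s) ?_ ?_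
        · rw [Finset.sum_range_succ, ← hδ2]; linarith [hδ.2, hδ1]
        · linarith [hγ.1, hγ1]
    · -- different parents
      refine ih (Fin.init γ) (Fin.init δ) hinit s ?_ ?_
      · have hn := nesting hM hc0 hcchild p (Fin.init γ) (γ (Fin.last (p + 1)))
        rw [ext1_init_self] at hn
        exact ⟨le_trans hn.1 hγ.1, lt_of_lt_of_le hγ.2 hn.2⟩
      · have hn := nesting hM hc0 hcchild p (Fin.init δ) (δ (Fin.last (p + 1)))
        rw [ext1_init_self] at hn
        exact ⟨le_trans hn.1 hδ.1, lt_of_lt_of_le hδ.2 hn.2⟩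

include hc0 hctot hcchild in
lemma br_eq_of_mem (p : ℕ) {s : ℝ} {γ : Gam M p} (hs0 : 0 ≤ s) (hs1 : s < 1)
    (h : ell M hM c p γ ≤ s ∧ s < ell M hM c p γ + c p γ) : br M hM c p s = γ := by
  by_contra hne
  exact interval_disjoint hM hc0 hcchild p _ _ hne s
    (br_invariant hM hc0 hctot hcchild p hs0 hs1) h

include hc0 hctot hcchild in
lemma interval_bounds : ∀ (p : ℕ) (γ : Gam M p),
    0 ≤ ell M hM c p γ ∧ ell M hM c p γ + c p γ ≤ 1 := by
  intro p
  induction p with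
  | zero =>
    intro γ
    set d : ℕ → ℝ := fun i => c 0 (constGam M (toFinM (hM 0) i)) with hd
    constructor
    · exact Finset.sum_nonneg (fun i _ => hc0 _ _)
    · have hcγ : c 0 γ = d ((γ 0 : ℕ)) := by
        have : constGam M (toFinM (hM 0) ((γ 0 : ℕ))) = γ := by
          rw [toFinM_self]; exact (gam0_eq_constGam M γ).symm
        rw [hd]; simp only; rw [this]
      have : (∑ t ∈ Finset.range ((γ 0 : ℕ) + 1), d t) ≤ ∑ t ∈ Finset.range (M 0), d t :=
        Finset.sum_le_sum_of_subset_of_nonneg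
          (Finset.range_subset_range.mpr (γ 0).isLt) (fun t _ _ => hc0 _ _)
      rw [Finset.sum_range_succ] at this
      have htot : (∑ t ∈ Finset.range (M 0), d t) = 1 := by
        rw [hd, sum_gam0 M (hM 0) (c 0)]; exact hctot
      show ell M hM c 0 γ + c 0 γ ≤ 1
      rw [ell_zero, hcγ]
      linarith [htot ▸ this]
  | succ p ih =>
    intro γ
    have hn := nesting hM hc0 hcchild p (Fin.init γ) (γ (Fin.last (p + 1)))
    rw [ext1_init_self] at hn
    obtain ⟨ih1, ih2⟩ := ih (Fin.init γ)
    exact ⟨le_trans ih1 hn.1, le_trans hn.2 ih2⟩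

end
end SCaux2

namespace SCaux3

open SCaux Metric

lemma exists_fin_partition {Y : Type*} [MetricSpace Y] [MeasurableSpace Y] [BorelSpace Y]
    {C : Set Y} (hC : IsCompact C) {ε : ℝ} (hε : 0 < ε) :
    ∃ (K : ℕ) (B : Fin K → Set Y),
      (∀ i, MeasurableSet (B i)) ∧ (∀ i, B i ⊆ C) ∧ (∀ i, Metric.diam (B i) ≤ ε) ∧
      (Pairwise (Function.onFun Disjoint B)) ∧ (⋃ i, B i) = C := by
  classical
  have hcov : C ⊆ ⋃ y : C, ball (y : Y) (ε / 2) := by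
    intro x hx
    exact mem_iUnion.mpr ⟨⟨x, hx⟩, mem_ball_self (half_pos hε)⟩
  obtain ⟨t, ht⟩ := hC.elim_finite_subcover (fun y : C => ball (y : Y) (ε / 2))
    (fun y => isOpen_ball) hcov
  set K := t.card with hK
  set e := t.equivFin with he
  set y : Fin K → Y := fun i => ((e.symm i : ↥t) : C) with hy
  refine ⟨K, fun i => (C ∩ ball (y i) (ε / 2)) \ ⋃ (j : Fin K) (_ : j < i), ball (y j) (ε / 2),
    ?_, ?_, ?_, ?_, ?_⟩
  · intro i
    exact ((hC.isClosed.measurableSet.inter measurableSet_ball).diff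
      (MeasurableSet.iUnion (fun j => MeasurableSet.iUnion (fun _ => measurableSet_ball))))
  · intro i
    exact fun x hx => hx.1.1
  · intro i
    refine le_trans (Metric.diam_mono (fun x hx => hx.1.2) isBounded_ball) ?_
    calc Metric.diam (ball (y i) (ε / 2)) ≤ 2 * (ε / 2) := diam_ball (by linarith)
      _ = ε := by ring
  · intro i j hij
    rcases lt_or_gt_of_ne hij with h | h
    · rw [Function.onFun, Set.disjoint_left]
      intro x hxi hxj
      exact hxj.2 (mem_iUnion.mpr ⟨i, mem_iUnion.mpr ⟨h, hxi.1.2⟩⟩)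
    · rw [Function.onFun, Set.disjoint_left]
      intro x hxi hxj
      exact hxi.2 (mem_iUnion.mpr ⟨j, mem_iUnion.mpr ⟨h, hxj.1.2⟩⟩)
  · apply Set.Subset.antisymm
    · exact Set.iUnion_subset (fun i x hx => hx.1.1)
    · intro x hx
      have hx' := ht hx
      rw [Set.mem_iUnion₂] at hx'
      obtain ⟨z, hz, hxz⟩ := hx'
      have hPex : ∃ n : ℕ, ∃ h : n < K, x ∈ ball (y ⟨n, h⟩) (ε / 2) := by
        refine ⟨(e ⟨z, hz⟩ : Fin K), (e ⟨z, hz⟩).isLt, ?_⟩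
        have : y ⟨(e ⟨z, hz⟩ : Fin K), (e ⟨z, hz⟩).isLt⟩ = (z : Y) := by
          rw [hy]; simp
        rwa [this]
      set n₀ := Nat.find hPex with hn₀
      obtain ⟨hlt, hmem⟩ := Nat.find_spec hPex
      rw [Set.mem_iUnion]
      refine ⟨⟨n₀, hlt⟩, ⟨⟨hx, hmem⟩, ?_⟩⟩
      rw [Set.mem_iUnion₂]
      rintro ⟨j, hj, hxj⟩
      have : ∃ h : (j : ℕ) < K, x ∈ ball (y ⟨(j : ℕ), h⟩) (ε / 2) := ⟨j.isLt, by
        convert hxj using 3 <;> simp⟩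
      exact Nat.find_min hPex (by exact_mod_cast hj) this

end SCaux3

namespace SCmain

open SCaux SCaux2 SCaux3 Metric

variable {Y : Type*} [MetricSpace Y] [MeasurableSpace Y] [BorelSpace Y]

theorem seq_compact_prob {C : Set Y} (hC : IsCompact C) (hCne : C.Nonempty)
    (τ : ℕ → Measure Y) (hτp : ∀ j, IsProbabilityMeasure (τ j)) (hτC : ∀ j, τ j Cᶜ = 0) :
    ∃ (k : ℕ → ℕ) (ν : Measure Y), StrictMono k ∧ IsProbabilityMeasure ν ∧ ν Cᶜ = 0 ∧
      ∀ f : Y → ℝ, Continuous f →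
        Tendsto (fun i => ∫ y, f y ∂τ (k i)) atTop (𝓝 (∫ y, f y ∂ν)) := by
  classical
  obtain ⟨x₀, hx₀⟩ := hCne
  -- partitions at every scale
  have hpart : ∀ q : ℕ, ∃ (K : ℕ) (B : Fin K → Set Y),
      (∀ i, MeasurableSet (B i)) ∧ (∀ i, B i ⊆ C) ∧ (∀ i, Metric.diam (B i) ≤ (1/2 : ℝ)^q) ∧
      (Pairwise (Function.onFun Disjoint B)) ∧ (⋃ i, B i) = C :=
    fun q => exists_fin_partition hC (by positivity)
  choose M B hBmeas hBsub hBdiam hBdisj hBunion using hpart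
  have hM : ∀ q, 0 < M q := by
    intro q
    rcases Nat.eq_zero_or_pos (M q) with h0 | h
    · exfalso
      haveI : IsEmpty (Fin (M q)) := by rw [h0]; infer_instance
      have : (⋃ i, B q i) = ∅ := Set.iUnion_of_empty _
      rw [hBunion q] at this
      exact absurd this (Set.nonempty_iff_ne_empty.mp ⟨x₀, hx₀⟩)
    · exact h
  -- pieces
  set E : ∀ p, Gam M p → Set Y := fun p γ => ⋂ q : Fin (p+1), B q (γ q) with hE
  have hEmeas : ∀ p γ, MeasurableSet (E p γ) := fun p γ =>
    MeasurableSet.iInter (fun q => hBmeas _ _)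
  have hEsub : ∀ p γ, E p γ ⊆ C := fun p γ =>
    (Set.iInter_subset _ 0).trans (hBsub _ _)
  have hEbdd : ∀ p γ, Bornology.IsBounded (E p γ) := fun p γ =>
    hC.isBounded.subset (hEsub p γ)
  have hEdiam : ∀ p γ, Metric.diam (E p γ) ≤ (1/2 : ℝ)^p := by
    intro p γ
    refine le_trans (Metric.diam_mono (Set.iInter_subset _ (Fin.last p))
      (hC.isBounded.subset (hBsub _ _))) ?_
    have := hBdiam (↑(Fin.last p)) (γ (Fin.last p))
    simpa [Fin.val_last] using this
  have hEdisj : ∀ p (γ δ : Gam M p), γ ≠ δ → Disjoint (E p γ) (E p δ) := by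
    intro p γ δ hne
    obtain ⟨q, hq⟩ := Function.ne_iff.mp hne
    exact Set.disjoint_of_subset (Set.iInter_subset _ q) (Set.iInter_subset _ q)
      (hBdisj (↑q) hq)
  have hEcover : ∀ p, ⋃ γ : Gam M p, E p γ = C := by
    intro p
    apply Set.Subset.antisymm
    · exact Set.iUnion_subset (fun γ => hEsub p γ)
    · intro x hx
      have hex : ∀ q : ℕ, ∃ i, x ∈ B q i := by
        intro q
        have : x ∈ ⋃ i, B q i := (hBunion q).symm ▸ hx
        exact Set.mem_iUnion.mp this
      choose idx hidx using hex
      exact Set.mem_iUnion.mpr ⟨fun q => idx ↑q, Set.mem_iInter.mpr (fun q => hidx ↑q)⟩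
  have hEext : ∀ p (γ : Gam M p) (m : Fin (M (p+1))),
      E (p+1) (ext1 M γ m) = E p γ ∩ B (p+1) m := by
    intro p γ m
    apply Set.Subset.antisymm
    · intro x hx
      rw [Set.mem_iInter] at hx
      constructor
      · rw [Set.mem_iInter]
        intro q
        have := hx q.castSucc
        rwa [ext1_castSucc] at this
      · have := hx (Fin.last (p+1))
        rwa [ext1_last] at this
    · rintro x ⟨h1, h2⟩
      rw [Set.mem_iInter]
      intro q
      induction q using Fin.lastCases with
      | last => rwa [ext1_last]
      | cast q' => rw [ext1_castSucc]; exact Set.mem_iInter.mp h1 q'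
  have hEchild : ∀ p (γ : Gam M p), E p γ = ⋃ m : Fin (M (p+1)), E (p+1) (ext1 M γ m) := by
    intro p γ
    have : ⋃ m : Fin (M (p+1)), E (p+1) (ext1 M γ m) = E p γ ∩ ⋃ m, B (p+1) m := by
      rw [Set.inter_iUnion]
      exact Set.iUnion_congr (fun m => hEext p γ m)
    rw [this, hBunion]
    exact (Set.inter_eq_left.mpr (hEsub p γ)).symm
  -- extraction of a converging subsequence of the mass vectors
  set w : ℕ → (Σ p : ℕ, Gam M p) → ℝ := fun j x => (τ j (E x.1 x.2)).toReal with hw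
  have hwmem : ∀ j, w j ∈ Set.pi Set.univ (fun _ : (Σ p : ℕ, Gam M p) => Set.Icc (0:ℝ) 1) := by
    intro j x _
    haveI := hτp j
    exact ⟨ENNReal.toReal_nonneg,
      by simpa using ENNReal.toReal_mono ENNReal.one_ne_top (prob_le_one (μ := τ j) (s := E x.1 x.2))⟩
  have hcpt : IsCompact (Set.pi Set.univ (fun _ : (Σ p : ℕ, Gam M p) => Set.Icc (0:ℝ) 1)) :=
    isCompact_univ_pi (fun _ => isCompact_Icc)
  obtain ⟨c', hc'mem, k, hk, hconv⟩ := hcpt.tendsto_subseq hwmem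
  set c : ∀ p, Gam M p → ℝ := fun p γ => c' ⟨p, γ⟩ with hcdef
  have hcconv : ∀ p (γ : Gam M p),
      Tendsto (fun i => (τ (k i) (E p γ)).toReal) atTop (𝓝 (c p γ)) := by
    intro p γ
    exact tendsto_pi_nhds.mp hconv ⟨p, γ⟩
  have hc0 : ∀ p (γ : Gam M p), 0 ≤ c p γ := fun p γ => (hc'mem ⟨p, γ⟩ (Set.mem_univ _)).1
  have hτCone : ∀ j, τ j C = 1 := by
    intro j
    haveI := hτp j
    have := measure_add_measure_compl (μ := τ j) hC.isClosed.measurableSet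
    rw [hτC j, add_zero, measure_univ] at this
    exact this
  -- sums of masses over a level
  have hsum1 : ∀ (μ : Measure Y), IsProbabilityMeasure μ → μ Cᶜ = 0 → ∀ p,
      ∑ γ : Gam M p, (μ (E p γ)).toReal = 1 := by
    intro μ hp hcc p
    haveI := hp
    have hμC : μ C = 1 := by
      have := measure_add_measure_compl (μ := μ) hC.isClosed.measurableSet
      rw [hcc, add_zero, measure_univ] at this
      exact this
    have := measure_iUnion (μ := μ)
      (fun γ δ hne => hEdisj p γ δ hne) (fun γ => hEmeas p γ)
    rw [hEcover p, tsum_fintype, hμC] at this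
    rw [← ENNReal.toReal_sum (fun γ _ => measure_ne_top μ _), ← this]
    rfl
  have hctot : ∑ γ : Gam M 0, c 0 γ = 1 := by
    refine tendsto_nhds_unique
      (tendsto_finset_sum _ (fun γ _ => hcconv 0 γ)) ?_
    have : (fun i => ∑ γ : Gam M 0, (τ (k i) (E 0 γ)).toReal) = fun _ => (1:ℝ) :=
      funext fun i => hsum1 (τ (k i)) (hτp _) (hτC _) 0
    rw [this]
    exact tendsto_const_nhds
  have hchildμ : ∀ j p (γ : Gam M p),
      (τ j (E p γ)).toReal = ∑ m : Fin (M (p+1)), (τ j (E (p+1) (ext1 M γ m))).toReal := by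
    intro j p γ
    have hdisj : Pairwise (Function.onFun Disjoint (fun m : Fin (M (p+1)) =>
        E (p+1) (ext1 M γ m))) := by
      intro m m' hne
      exact hEdisj (p+1) _ _ (fun h => hne (ext1_injective M γ h))
    have := measure_iUnion (μ := τ j) hdisj (fun m => hEmeas (p+1) _)
    rw [← hEchild p γ, tsum_fintype] at this
    rw [this, ENNReal.toReal_sum (fun m _ => measure_ne_top _ _)]
  have hcchild : ∀ p (γ : Gam M p),
      c p γ = ∑ m : Fin (M (p+1)), c (p+1) (ext1 M γ m) := by
    intro p γ
    refine tendsto_nhds_unique (hcconv p γ) ?_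
    have : (fun i => (τ (k i) (E p γ)).toReal) =
        fun i => ∑ m : Fin (M (p+1)), (τ (k i) (E (p+1) (ext1 M γ m))).toReal :=
      funext fun i => hchildμ (k i) p γ
    rw [this]
    exact tendsto_finset_sum _ (fun m _ => hcconv (p+1) _)
  have hcpos_ne : ∀ p (γ : Gam M p), 0 < c p γ → (E p γ).Nonempty := by
    intro p γ hpos
    by_contra hne
    rw [Set.not_nonempty_iff_eq_empty] at hne
    have : c p γ = 0 := by
      refine tendsto_nhds_unique (hcconv p γ) ?_
      have : (fun i => (τ (k i) (E p γ)).toReal) = fun _ => (0:ℝ) := by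
        funext i; rw [hne]; simp
      rw [this]
      exact tendsto_const_nhds
    rw [this] at hpos
    exact lt_irrefl _ hpos
  -- points in the pieces
  set xp : ∀ p, Gam M p → Y := fun p γ => if h : (E p γ).Nonempty then h.some else x₀ with hxp
  have hxpC : ∀ p γ, xp p γ ∈ C := by
    intro p γ
    by_cases h : (E p γ).Nonempty
    · simp only [hxp, dif_pos h]; exact hEsub p γ h.some_mem
    · simp only [hxp, dif_neg h]; exact hx₀
  have hxpE : ∀ p γ, (E p γ).Nonempty → xp p γ ∈ E p γ := by
    intro p γ h
    simp only [hxp, dif_pos h]; exact h.some_mem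
  -- the approximating maps on [0,1)
  set gp : ℕ → ℝ → Y := fun p s =>
    if 0 ≤ s ∧ s < 1 then xp p (br M hM c p s) else x₀ with hgp
  have hgpC : ∀ p s, gp p s ∈ C := by
    intro p s
    by_cases hs : 0 ≤ s ∧ s < 1
    · simp only [hgp, if_pos hs]; exact hxpC _ _
    · simp only [hgp, if_neg hs]; exact hx₀
  set I : ∀ p, Gam M p → Set ℝ :=
    fun p γ => Set.Ico (ell M hM c p γ) (ell M hM c p γ + c p γ) with hI
  have hImeas : ∀ p (γ : Gam M p), MeasurableSet (I p γ) := fun p γ => measurableSet_Ico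
  have hIsub : ∀ p γ, I p γ ⊆ Set.Ico (0:ℝ) 1 := by
    intro p γ s hs
    obtain ⟨hb1, hb2⟩ := interval_bounds hM hc0 hctot hcchild p γ
    exact ⟨le_trans hb1 hs.1, lt_of_lt_of_le hs.2 hb2⟩
  have hbrI : ∀ p {s : ℝ}, 0 ≤ s → s < 1 → s ∈ I p (br M hM c p s) := by
    intro p s hs0 hs1
    exact br_invariant hM hc0 hctot hcchild p hs0 hs1
  have hIbr : ∀ p {s : ℝ} {γ : Gam M p}, 0 ≤ s → s < 1 → s ∈ I p γ →
      br M hM c p s = γ := by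
    intro p s γ hs0 hs1 hmem
    exact br_eq_of_mem hM hc0 hctot hcchild p hs0 hs1 hmem
  have hgpmeas : ∀ p, Measurable (gp p) := by
    intro p
    intro T hT
    have hpre : gp p ⁻¹' T =
        (⋃ γ ∈ {γ : Gam M p | xp p γ ∈ T}, I p γ) ∪
          (if x₀ ∈ T then (Set.Ico (0:ℝ) 1)ᶜ else ∅) := by
      ext s
      by_cases hs : 0 ≤ s ∧ s < 1
      · have hsm : s ∈ Set.Ico (0:ℝ) 1 := ⟨hs.1, hs.2⟩
        simp only [Set.mem_preimage, hgp, if_pos hs, Set.mem_union, Set.mem_iUnion,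
          Set.mem_setOf_eq, exists_prop]
        constructor
        · intro hmem
          exact Or.inl ⟨br M hM c p s, hmem, hbrI p hs.1 hs.2⟩
        · rintro (⟨γ, hγT, hsI⟩ | habs)
          · rw [hIbr p hs.1 hs.2 hsI]; exact hγT
          · exfalso
            by_cases hx0 : x₀ ∈ T
            · rw [if_pos hx0] at habs; exact habs hsm
            · rw [if_neg hx0] at habs; exact habs
      · simp only [Set.mem_preimage, hgp, if_neg hs, Set.mem_union, Set.mem_iUnion,
          Set.mem_setOf_eq, exists_prop]
        constructor
        · intro hmem
          right
          rw [if_pos hmem]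
          intro hsm
          exact hs ⟨hsm.1, hsm.2⟩
        · rintro (⟨γ, hγT, hsI⟩ | habs)
          · exact absurd (hIsub p γ hsI) (fun hsm => hs ⟨hsm.1, hsm.2⟩)
          · by_cases hx0 : x₀ ∈ T
            · exact hx0
            · rw [if_neg hx0] at habs; exact absurd habs (Set.notMem_empty s)
    rw [hpre]
    refine MeasurableSet.union ?_ ?_
    · exact MeasurableSet.biUnion (Set.to_countable _) (fun γ _ => measurableSet_Ico)
    · by_cases hx0 : x₀ ∈ T
      · rw [if_pos hx0]; exact measurableSet_Ico.compl
      · rw [if_neg hx0]; exact MeasurableSet.empty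
  -- pointwise limit of the approximating maps
  have hcauchy : ∀ s : ℝ, ∃ y ∈ C, Tendsto (fun p => gp p s) atTop (𝓝 y) := by
    intro s
    by_cases hs : 0 ≤ s ∧ s < 1
    · have hdist : ∀ p, dist (gp p s) (gp (p+1) s) ≤ 1 * (1/2 : ℝ)^p := by
        intro p
        have hinv := hbrI p hs.1 hs.2
        have hinv' := hbrI (p+1) hs.1 hs.2
        have hcpos : 0 < c p (br M hM c p s) := by
          have := hinv.1
          have := hinv.2
          simp only [hI, Set.mem_Ico] at hinv
          linarith [hinv.1, hinv.2]
        have hcpos' : 0 < c (p+1) (br M hM c (p+1) s) := by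
          simp only [hI, Set.mem_Ico] at hinv'
          linarith [hinv'.1, hinv'.2]
        have hne := hcpos_ne _ _ hcpos
        have hne' := hcpos_ne _ _ hcpos'
        have hx1 : gp p s = xp p (br M hM c p s) := by simp only [hgp, if_pos hs]
        have hx2 : gp (p+1) s = xp (p+1) (br M hM c (p+1) s) := by
          simp only [hgp, if_pos hs]
        have hm1 : gp p s ∈ E p (br M hM c p s) := hx1 ▸ hxpE _ _ hne
        have hm2 : gp (p+1) s ∈ E p (br M hM c p s) := by
          have hsubE : E (p+1) (br M hM c (p+1) s) ⊆ E p (br M hM c p s) := by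
            have hb : br M hM c (p+1) s = ext1 M (br M hM c p s)
                (br M hM c (p+1) s (Fin.last (p+1))) := by
              conv_lhs => rw [← ext1_init_self M (br M hM c (p+1) s)]
              rw [init_br]
            rw [hb, hEext]
            exact Set.inter_subset_left
          exact hsubE (hx2 ▸ hxpE _ _ hne')
        calc dist (gp p s) (gp (p+1) s) ≤ Metric.diam (E p (br M hM c p s)) :=
              Metric.dist_le_diam_of_mem (hEbdd _ _) hm1 hm2
          _ ≤ (1/2 : ℝ)^p := hEdiam _ _
          _ = 1 * (1/2 : ℝ)^p := (one_mul _).symm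
      have hcs : CauchySeq (fun p => gp p s) :=
        cauchySeq_of_le_geometric (1/2) 1 (by norm_num) hdist
      have := (hC.isComplete) (Filter.map (fun p => gp p s) atTop) hcs
        (le_principal_iff.mpr (Filter.mem_map.mpr (Filter.univ_mem' (fun p => hgpC p s))))
      obtain ⟨y, hyC, hy⟩ := this
      exact ⟨y, hyC, hy⟩
    · refine ⟨x₀, hx₀, ?_⟩
      have : (fun p => gp p s) = fun _ => x₀ := funext fun p => by
        simp only [hgp, if_neg hs]
      rw [this]
      exact tendsto_const_nhds
  choose g hgC hglim using hcauchy
  have hgmeas : Measurable g :=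
    measurable_of_tendsto_metrizable' atTop hgpmeas (tendsto_pi_nhds.mpr hglim)
  set κ : Measure ℝ := volume.restrict (Set.Ico 0 1) with hκ
  haveI hκprob : IsProbabilityMeasure κ := by
    constructor
    rw [hκ, Measure.restrict_apply_univ, Real.volume_Ico]
    norm_num
  set ν : Measure Y := κ.map g with hν
  haveI hνp : IsProbabilityMeasure ν := Measure.isProbabilityMeasure_map hgmeas.aemeasurable
  have hνC : ν Cᶜ = 0 := by
    rw [hν, Measure.map_apply hgmeas hC.isClosed.measurableSet.compl]
    have : g ⁻¹' Cᶜ = ∅ := by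
      ext s
      simp only [Set.mem_preimage, Set.mem_compl_iff, Set.mem_empty_iff_false,
        iff_false, not_not]
      exact hgC s
    rw [this]
    exact measure_empty
  refine ⟨k, ν, hk, hνp, hνC, ?_⟩
  intro f hf
  obtain ⟨Rf, hRf⟩ := hC.exists_bound_of_continuousOn hf.continuousOn
  have hRf0 : 0 ≤ Rf := le_trans (norm_nonneg _) (hRf x₀ hx₀)
  have haeC : ∀ (μ : Measure Y), μ Cᶜ = 0 → (∀ᵐ y ∂μ, y ∈ C) := by
    intro μ hcc
    rw [MeasureTheory.ae_iff]
    have : {y | ¬ y ∈ C} = Cᶜ := rfl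
    rw [this]
    exact hcc
  have hInt : ∀ (μ : Measure Y), IsProbabilityMeasure μ → μ Cᶜ = 0 → Integrable f μ := by
    intro μ hp hcc
    haveI := hp
    exact (integrable_const Rf).mono' hf.aestronglyMeasurable
      ((haeC μ hcc).mono (fun y hy => hRf y hy))
  have hAint : ∀ (μ : Measure Y), IsProbabilityMeasure μ → μ Cᶜ = 0 → ∀ p,
      ∫ y, f y ∂μ = ∑ γ : Gam M p, ∫ y in E p γ, f y ∂μ := by
    intro μ hp hcc p
    haveI := hp
    have hint := hInt μ hp hcc
    have hcompl : ∫ y in (⋃ γ : Gam M p, E p γ)ᶜ, f y ∂μ = 0 := by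
      have h0 : μ ((⋃ γ : Gam M p, E p γ)ᶜ) = 0 := by rw [hEcover p]; exact hcc
      rw [Measure.restrict_eq_zero.mpr h0]
      exact integral_zero_measure f
    have hiu := integral_iUnion (fun γ : Gam M p => hEmeas p γ)
      (fun γ δ hne => hEdisj p γ δ hne) hint.integrableOn
    have hplus := integral_add_compl
      (MeasurableSet.iUnion (fun γ : Gam M p => hEmeas p γ)) hint
    rw [hcompl, add_zero] at hplus
    rw [← hplus, hiu, tsum_fintype]
  have hUE : ∀ ε : ℝ, 0 < ε → ∃ P : ℕ, ∀ p, P ≤ p → ∀ (μ : Measure Y),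
      IsProbabilityMeasure μ → μ Cᶜ = 0 →
      |(∫ y, f y ∂μ) - ∑ γ : Gam M p, (μ (E p γ)).toReal * f (xp p γ)| ≤ ε := by
    intro ε hε
    have huc := hC.uniformContinuousOn_of_continuous hf.continuousOn
    rw [Metric.uniformContinuousOn_iff] at huc
    obtain ⟨δ, hδ0, hδ⟩ := huc ε hε
    obtain ⟨P, hP⟩ := exists_pow_lt_of_lt_one hδ0 (by norm_num : (1/2 : ℝ) < 1)
    refine ⟨P, ?_⟩
    intro p hpP μ hμp hcc
    haveI := hμp
    have hdiam : (1/2 : ℝ)^p < δ :=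
      lt_of_le_of_lt (pow_le_pow_of_le_one (by norm_num) (by norm_num) hpP) hP
    have hterm : ∀ γ : Gam M p,
        |(∫ y in E p γ, f y ∂μ) - (μ (E p γ)).toReal * f (xp p γ)| ≤
          ε * (μ (E p γ)).toReal := by
      intro γ
      by_cases hem : (E p γ).Nonempty
      · have hxγ := hxpE p γ hem
        have hsub : ∫ y in E p γ, (f y - f (xp p γ)) ∂μ
            = (∫ y in E p γ, f y ∂μ) - (μ (E p γ)).toReal * f (xp p γ) := by
          rw [integral_sub (hInt μ hμp hcc).integrableOn
            (integrableOn_const (measure_lt_top μ _).ne)]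
          rw [setIntegral_const, smul_eq_mul, measureReal_def]
        rw [← hsub]
        have hkey := norm_setIntegral_le_of_norm_le_const (μ := μ) (s := E p γ)
          (f := fun y => f y - f (xp p γ)) (C := ε) (measure_lt_top μ _)
          (fun y hy => by
            have hd : dist y (xp p γ) < δ := by
              calc dist y (xp p γ) ≤ Metric.diam (E p γ) :=
                    Metric.dist_le_diam_of_mem (hEbdd p γ) hy hxγ
                _ ≤ (1/2 : ℝ)^p := hEdiam p γ
                _ < δ := hdiam
            have := hδ y (hEsub p γ hy) (xp p γ) (hxpC p γ) hd
            rw [Real.dist_eq] at this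
            exact le_of_lt (by simpa [Real.norm_eq_abs] using this))
        rw [Real.norm_eq_abs, measureReal_def] at hkey
        linarith [hkey]
      · rw [Set.not_nonempty_iff_eq_empty] at hem
        rw [hem]
        simp
    calc |(∫ y, f y ∂μ) - ∑ γ : Gam M p, (μ (E p γ)).toReal * f (xp p γ)|
        = |∑ γ : Gam M p, ((∫ y in E p γ, f y ∂μ) -
            (μ (E p γ)).toReal * f (xp p γ))| := by
          rw [Finset.sum_sub_distrib, ← hAint μ hμp hcc p]
      _ ≤ ∑ γ : Gam M p, |(∫ y in E p γ, f y ∂μ) -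
            (μ (E p γ)).toReal * f (xp p γ)| := Finset.abs_sum_le_sum_abs _ _
      _ ≤ ∑ γ : Gam M p, ε * (μ (E p γ)).toReal :=
            Finset.sum_le_sum (fun γ _ => hterm γ)
      _ = ε * ∑ γ : Gam M p, (μ (E p γ)).toReal := by rw [Finset.mul_sum]
      _ = ε := by rw [hsum1 μ hμp hcc p, mul_one]
  have hIcoUnion : ∀ p, ⋃ γ : Gam M p, I p γ = Set.Ico (0:ℝ) 1 := by
    intro p
    apply Set.Subset.antisymm
    · exact Set.iUnion_subset (fun γ => hIsub p γ)
    · intro s hs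
      exact Set.mem_iUnion.mpr ⟨br M hM c p s, hbrI p hs.1 hs.2⟩
  have hκcompl : ∀ p, κ ((⋃ γ : Gam M p, I p γ)ᶜ) = 0 := by
    intro p
    rw [hIcoUnion p, hκ, Measure.restrict_apply measurableSet_Ico.compl]
    simp
  have hgpint : ∀ p, Integrable (fun s => f (gp p s)) κ := by
    intro p
    exact (integrable_const Rf).mono'
      (hf.measurable.comp (hgpmeas p)).aestronglyMeasurable
      (Filter.Eventually.of_forall (fun s => hRf _ (hgpC p s)))
  have hIdisj : ∀ p, Pairwise (Function.onFun Disjoint (I p)) := by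
    intro p γ δ hne
    rw [Function.onFun, Set.disjoint_left]
    intro s hsγ hsδ
    exact interval_disjoint hM hc0 hcchild p γ δ hne s ⟨hsγ.1, hsγ.2⟩ ⟨hsδ.1, hsδ.2⟩
  have hKP : ∀ p, ∫ s, f (gp p s) ∂κ = ∑ γ : Gam M p, c p γ * f (xp p γ) := by
    intro p
    have hcompl : ∫ s in (⋃ γ : Gam M p, I p γ)ᶜ, f (gp p s) ∂κ = 0 := by
      rw [Measure.restrict_eq_zero.mpr (hκcompl p)]
      exact integral_zero_measure _
    have hplus := integral_add_compl
      (MeasurableSet.iUnion (fun γ : Gam M p => hImeas p γ)) (hgpint p)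
    rw [hcompl, add_zero] at hplus
    have hiu := integral_iUnion (μ := κ) (fun γ : Gam M p => hImeas p γ)
      (hIdisj p) (hgpint p).integrableOn
    rw [← hplus, hiu, tsum_fintype]
    refine Finset.sum_congr rfl (fun γ _ => ?_)
    have hconst : ∀ s ∈ I p γ, f (gp p s) = f (xp p γ) := by
      intro s hsI
      have hs01 : s ∈ Set.Ico (0:ℝ) 1 := hIsub p γ hsI
      have hgps : gp p s = xp p γ := by
        have hcond : 0 ≤ s ∧ s < 1 := ⟨hs01.1, hs01.2⟩
        simp only [hgp, if_pos hcond]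
        rw [hIbr p hs01.1 hs01.2 hsI]
      rw [hgps]
    rw [setIntegral_congr_fun (hImeas p γ) hconst, setIntegral_const]
    have hκI : κ (I p γ) = ENNReal.ofReal (c p γ) := by
      rw [hκ, Measure.restrict_apply (hImeas p γ),
        Set.inter_eq_left.mpr (hIsub p γ)]
      rw [hI]
      rw [Real.volume_Ico]
      congr 1
      ring
    rw [measureReal_def, hκI, ENNReal.toReal_ofReal (hc0 p γ), smul_eq_mul]
  have hmapint : ∫ y, f y ∂ν = ∫ s, f (g s) ∂κ := by
    rw [hν]
    exact integral_map hgmeas.aemeasurable hf.aestronglyMeasurable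
  have hDCT : Tendsto (fun p => ∫ s, f (gp p s) ∂κ) atTop (𝓝 (∫ y, f y ∂ν)) := by
    rw [hmapint]
    exact tendsto_integral_of_dominated_convergence (fun _ => Rf)
      (fun p => (hf.measurable.comp (hgpmeas p)).aestronglyMeasurable)
      (integrable_const Rf)
      (fun p => Filter.Eventually.of_forall (fun s => hRf _ (hgpC p s)))
      (Filter.Eventually.of_forall (fun s => (hf.tendsto (g s)).comp (hglim s)))
  rw [Metric.tendsto_atTop]
  intro ε hε
  obtain ⟨P₁, hP₁⟩ := hUE (ε/4) (by linarith)
  obtain ⟨P₂, hP₂⟩ := Metric.tendsto_atTop.mp hDCT (ε/4) (by linarith)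
  set p := max P₁ P₂ with hpdef
  have hApconv := tendsto_finset_sum (Finset.univ : Finset (Gam M p))
      (fun γ (_ : γ ∈ Finset.univ) => (hcconv p γ).mul_const (f (xp p γ)))
  obtain ⟨N, hN⟩ := Metric.tendsto_atTop.mp hApconv (ε/4) (by linarith)
  refine ⟨N, ?_⟩
  intro i hi
  have h1 := hP₁ p (le_max_left _ _) (τ (k i)) (hτp _) (hτC _)
  have h2 := hN i hi
  have h3 := hP₂ p (le_max_right _ _)
  rw [Real.dist_eq] at h2 h3 ⊢
  rw [hKP p] at h3
  have t1 := abs_sub_le (∫ y, f y ∂τ (k i))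
    (∑ γ : Gam M p, (τ (k i) (E p γ)).toReal * f (xp p γ)) (∫ y, f y ∂ν)
  have t2 := abs_sub_le (∑ γ : Gam M p, (τ (k i) (E p γ)).toReal * f (xp p γ))
    (∑ γ : Gam M p, c p γ * f (xp p γ)) (∫ y, f y ∂ν)
  linarith [h1, h2, h3, t1, t2]

end SCmain

namespace SChelpers

open BoundedContinuousFunction

lemma exists_cont_ext {Y : Type*} [MetricSpace Y] {s : Set Y} (hs : IsClosed s)
    {f : Y → ℝ} (hf : ContinuousOn f s) :
    ∃ g : Y → ℝ, Continuous g ∧ ∀ x ∈ s, g x = f x := by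
  obtain ⟨g, hg⟩ := ContinuousMap.exists_restrict_eq hs ⟨s.restrict f, hf.restrict⟩
  refine ⟨g, g.continuous, ?_⟩
  intro x hx
  have := congrArg (fun h => h ⟨x, hx⟩) (congrArg DFunLike.coe hg)
  exact this

lemma exists_bdd_ext {Y : Type*} [MetricSpace Y] {s : Set Y} (hs : IsCompact s)
    {f : Y → ℝ} (hf : ContinuousOn f s) :
    ∃ (g : Y → ℝ) (R : ℝ), Continuous g ∧ (∀ y, ‖g y‖ ≤ R) ∧ ∀ x ∈ s, g x = f x := by
  haveI : CompactSpace ↥s := isCompact_iff_compactSpace.mp hs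
  set fb : s →ᵇ ℝ := BoundedContinuousFunction.mkOfCompact ⟨s.restrict f, hf.restrict⟩ with hfb
  obtain ⟨g, hnorm, hres⟩ := exists_norm_eq_restrict_eq_of_closed fb hs.isClosed
  refine ⟨g, ‖g‖, g.continuous, fun y => g.norm_coe_le_norm y, ?_⟩
  intro x hx
  have := congrArg (fun h => h ⟨x, hx⟩) (congrArg DFunLike.coe hres)
  exact this

end SChelpers


set_option maxHeartbeats 3000000 in
/-- Lemma 3.4 ("sc-cpt"): compactness of minimizing measures for the state
constraint problem along a sequence of discount factors. -/
theorem stmt5 {n : ℕ} {A : Type*} [MetricSpace A] [Nonempty A]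
    [SigmaCompactSpace A] [LocallyCompactSpace A] [MeasurableSpace A] [BorelSpace A]
    (Ω : Set (EucV n)) (hΩ : BoundedDomain Ω)
    (a : EucV n → A → Matrix (Fin n) (Fin n) ℝ) (b : EucV n → A → EucV n)
    (L : EucV n → A → ℝ) (F : Op n)
    (hdata : CondData Ω a b L) (hF1 : CondF1 Ω a b L F) (hF2 : CondF2 Ω F)
    (hL : CondL Ω L)
    (z : EucV n) (hz : z ∈ closure Ω)
    (lams : ℕ → ℝ) (hlams : ∀ j, 0 ≤ lams j)
    (μs : ℕ → Measure (EucV n × A))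
    (hμs : ∀ j, μs j ∈ PSset Ω ∧ μs j ∈ GSdual Ω L F z (lams j))
    (ρ lam : ℝ) (hlam : 0 ≤ lam)
    (h1 : Tendsto (fun j => intL L (μs j)) atTop (𝓝 ρ))
    (h2 : Tendsto lams atTop (𝓝 lam)) :
    ∃ ν : Measure (EucV n × A), ν ∈ PSset Ω ∧ ν ∈ GSdual Ω L F z lam ∧ intL L ν = ρ ∧
      ∃ k : ℕ → ℕ, StrictMono k ∧
        ∀ ψ : EucV n → ℝ, ContinuousOn ψ (closure Ω) →
          Tendsto (fun i => ∫ q : EucV n × A, ψ q.1 ∂(μs (k i))) atTop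
            (𝓝 (∫ q : EucV n × A, ψ q.1 ∂ν)) := by
  classical
  obtain ⟨hΩopen, hΩconn, hΩbdd⟩ := hΩ
  have hcl : IsCompact (closure Ω) :=
    Metric.isCompact_of_isClosed_isBounded isClosed_closure hΩbdd.closure
  have hclne : (closure Ω).Nonempty := hΩconn.nonempty.mono subset_closure
  set Kcl : Set (EucV n × A) := (closure Ω) ×ˢ (Set.univ : Set A) with hKcl
  have hKclclosed : IsClosed Kcl := isClosed_closure.prod isClosed_univ
  set Lfun : EucV n × A → ℝ := fun q => L q.1 q.2 with hLfun
  have hLcont : ContinuousOn Lfun Kcl := hdata.2.2.1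
  obtain ⟨Lb, hLbcont, hLbeq⟩ := SChelpers.exists_cont_ext hKclclosed hLcont
  have hμp : ∀ j, IsProbabilityMeasure (μs j) := fun j => (hμs j).1.1
  have hμsupp : ∀ j, (μs j) Kclᶜ = 0 := fun j => (hμs j).1.2
  have haeK : ∀ (m : Measure (EucV n × A)), m Kclᶜ = 0 → ∀ᵐ q ∂m, q ∈ Kcl := by
    intro m hm
    rw [MeasureTheory.ae_iff]
    have : {q : EucV n × A | ¬ q ∈ Kcl} = Kclᶜ := rfl
    rw [this]
    exact hm
  have hμL : ∀ j, Integrable Lfun (μs j) := fun j => (hμs j).2.1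
  have hμLb : ∀ j, Integrable Lb (μs j) := fun j =>
    (hμL j).congr ((haeK _ (hμsupp j)).mono (fun q hq => (hLbeq q hq).symm))
  have hintLb : ∀ j, intL L (μs j) = ∫ q, Lb q ∂(μs j) := fun j =>
    integral_congr_ae ((haeK _ (hμsupp j)).mono (fun q hq => (hLbeq q hq).symm))
  -- control region in `A`
  obtain ⟨K₁, hK₁cpt, hK₁⟩ := hL ρ
  set αs : A := if h : ∃ α : A, α ∉ K₁ then h.choose else Classical.arbitrary A with hαs
  have hLαs : ContinuousOn (fun x => L x αs) (closure Ω) := by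
    have heq : (fun x => L x αs) = Lfun ∘ (fun x => (x, αs)) := rfl
    rw [heq]
    exact hLcont.comp ((continuous_id.prodMk continuous_const).continuousOn)
      (fun x hx => ⟨hx, Set.mem_univ _⟩)
  obtain ⟨C₀, hC₀⟩ := hcl.exists_bound_of_continuousOn hLαs
  obtain ⟨K₂, hK₂cpt, hK₂⟩ := hL C₀
  set K₃ : Set A := (K₁ ∪ K₂) ∪ {αs} with hK₃
  have hK₃cpt : IsCompact K₃ := (hK₁cpt.union hK₂cpt).union isCompact_singleton
  have hαsK₃ : αs ∈ K₃ := Or.inr rfl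
  set C : Set (EucV n × A) := (closure Ω) ×ˢ K₃ with hCdef
  have hCcpt : IsCompact C := hcl.prod hK₃cpt
  have hCne : C.Nonempty := ⟨(hclne.choose, αs), hclne.choose_spec, hαsK₃⟩
  have hCKcl : C ⊆ Kcl := Set.prod_mono subset_rfl (Set.subset_univ _)
  set S : Set (EucV n × A) := (Set.univ : Set (EucV n)) ×ˢ K₃ with hSdef
  have hSmeas : MeasurableSet S := MeasurableSet.univ.prod hK₃cpt.isClosed.measurableSet
  set em : (EucV n × A) → (EucV n × A) := fun q => (q.1, αs) with hemdef
  have hemm : Measurable em := measurable_fst.prodMk measurable_const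
  set τ : ℕ → Measure (EucV n × A) :=
    fun j => (μs j).restrict S + ((μs j).restrict Sᶜ).map em with hτdef
  haveI hfinmap : ∀ j, IsFiniteMeasure (((μs j).restrict Sᶜ).map em) := by
    intro j
    haveI := hμp j
    constructor
    rw [Measure.map_apply hemm MeasurableSet.univ]
    exact measure_lt_top _ _
  have hτprob : ∀ j, IsProbabilityMeasure (τ j) := by
    intro j
    haveI := hμp j
    constructor
    rw [hτdef]
    simp only [Measure.add_apply, Measure.restrict_apply_univ,
      Measure.map_apply hemm MeasurableSet.univ, Set.preimage_univ]
    rw [measure_add_measure_compl hSmeas, measure_univ]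
  have hτsupp : ∀ j, τ j Cᶜ = 0 := by
    intro j
    rw [hτdef]
    simp only [Measure.add_apply]
    have h1 : (μs j).restrict S Cᶜ = 0 := by
      rw [Measure.restrict_apply (hCcpt.isClosed.measurableSet.compl)]
      refine measure_mono_null ?_ (hμsupp j)
      rintro ⟨x, α⟩ ⟨hq1, hq2⟩
      simp only [hKcl, Set.mem_compl_iff, Set.mem_prod, Set.mem_univ, and_true]
      intro hx
      exact hq1 ⟨hx, hq2.2⟩
    have hsub : em ⁻¹' Cᶜ ⊆ Kclᶜ := by
      rintro ⟨x, α⟩ hq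
      simp only [Set.mem_preimage, hemdef, Set.mem_compl_iff] at hq
      simp only [Set.mem_compl_iff, hKcl, Set.mem_prod, Set.mem_univ, and_true]
      intro hx
      exact hq ⟨hx, hαsK₃⟩
    have h2 : (((μs j).restrict Sᶜ).map em) Cᶜ = 0 := by
      rw [Measure.map_apply hemm (hCcpt.isClosed.measurableSet.compl)]
      refine le_antisymm ?_ (by positivity)
      calc ((μs j).restrict Sᶜ) (em ⁻¹' Cᶜ) ≤ (μs j) (em ⁻¹' Cᶜ) :=
            Measure.restrict_apply_le _ _
        _ ≤ (μs j) Kclᶜ := measure_mono hsub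
        _ = 0 := hμsupp j
    rw [h1, h2, add_zero]
  -- extract subsequence
  obtain ⟨k, νlow, hk, hνlowp, hνlowC, hτconv⟩ :=
    SCmain.seq_compact_prob hCcpt hCne τ hτprob hτsupp
  haveI := hνlowp
  have hktend : Tendsto k atTop atTop := hk.tendsto_atTop
  have hIntBdd : ∀ (m : Measure (EucV n × A)), IsFiniteMeasure m → ∀ (Φ : EucV n → ℝ),
      Continuous Φ → (∃ R, ∀ x, ‖Φ x‖ ≤ R) →
      Integrable (fun q : EucV n × A => Φ q.1) m := by
    rintro m hfin Φ hcont ⟨R, hR⟩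
    haveI := hfin
    exact (integrable_const R).mono' (hcont.comp continuous_fst).aestronglyMeasurable
      (Filter.Eventually.of_forall (fun q => hR q.1))
  have hmarg : ∀ (j : ℕ) (Φ : EucV n → ℝ), Continuous Φ → (∃ R, ∀ x, ‖Φ x‖ ≤ R) →
      ∫ q, Φ q.1 ∂(τ j) = ∫ q, Φ q.1 ∂(μs j) := by
    intro j Φ hΦc hΦb
    haveI := hμp j
    have hint : Integrable (fun q : EucV n × A => Φ q.1) (μs j) := hIntBdd _ inferInstance Φ hΦc hΦb
    rw [hτdef]
    simp only
    rw [integral_add_measure hint.restrict (hIntBdd _ (hfinmap j) Φ hΦc hΦb),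
      integral_map (f := fun q : EucV n × A => Φ q.1) hemm.aemeasurable
        ((hΦc.comp continuous_fst).aestronglyMeasurable)]
    have heq : (fun q : EucV n × A => Φ (em q).1) = fun q : EucV n × A => Φ q.1 := rfl
    rw [heq]
    exact integral_add_compl hSmeas hint
  have hbddLbem : ∃ R₁, ∀ x ∈ closure Ω, ‖Lb (x, αs)‖ ≤ R₁ := by
    obtain ⟨R₁, hR₁⟩ := (hcl.prod (isCompact_singleton : IsCompact ({αs} : Set A))
      ).exists_bound_of_continuousOn hLbcont.continuousOn
    exact ⟨R₁, fun x hx => hR₁ (x, αs) ⟨hx, rfl⟩⟩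
  have hLbτle : ∀ j, ∫ q, Lb q ∂(τ j) ≤ ∫ q, Lb q ∂(μs j) := by
    intro j
    haveI := hμp j
    obtain ⟨R₁, hR₁⟩ := hbddLbem
    have haeS : ∀ᵐ q ∂((μs j).restrict Sᶜ), q ∈ Sᶜ := ae_restrict_mem hSmeas.compl
    have haeKr : ∀ᵐ q ∂((μs j).restrict Sᶜ), q ∈ Kcl := ae_restrict_of_ae (haeK _ (hμsupp j))
    have hintem : Integrable (fun q => Lb (em q)) ((μs j).restrict Sᶜ) := by
      refine (integrable_const R₁).mono'
        ((hLbcont.comp (continuous_fst.prodMk continuous_const)).aestronglyMeasurable) ?_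
      exact haeKr.mono (fun q hq => hR₁ q.1 hq.1)
    have hintLbr : Integrable Lb ((μs j).restrict Sᶜ) := (hμLb j).restrict
    have hmono : ∫ q, Lb (em q) ∂((μs j).restrict Sᶜ) ≤
        ∫ q, Lb q ∂((μs j).restrict Sᶜ) := by
      refine integral_mono_ae hintem hintLbr ?_
      filter_upwards [haeS, haeKr] with q hqS hqK
      have hq1 : q.1 ∈ closure Ω := hqK.1
      have hq2 : q.2 ∉ K₃ := fun hq2 => hqS ⟨Set.mem_univ _, hq2⟩
      have hq2' : q.2 ∉ K₂ := fun h => hq2 (Or.inl (Or.inr h))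
      have hL2 : C₀ ≤ L q.1 q.2 := hK₂ q.1 hq1 q.2 hq2'
      have hLas : L q.1 αs ≤ C₀ := le_trans (le_abs_self _) (hC₀ q.1 hq1)
      have e1 : Lb (em q) = L q.1 αs := hLbeq (q.1, αs) ⟨hq1, Set.mem_univ _⟩
      have e2 : Lb q = L q.1 q.2 := hLbeq q hqK
      rw [e1, e2]
      linarith
    have hmapint : Integrable Lb (((μs j).restrict Sᶜ).map em) :=
      (integrable_map_measure hLbcont.aestronglyMeasurable hemm.aemeasurable).mpr hintem
    calc ∫ q, Lb q ∂(τ j)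
        = (∫ q, Lb q ∂((μs j).restrict S)) + ∫ q, Lb (em q) ∂((μs j).restrict Sᶜ) := by
          rw [hτdef]
          simp only
          rw [integral_add_measure (hμLb j).restrict hmapint,
            integral_map hemm.aemeasurable hLbcont.aestronglyMeasurable]
      _ ≤ (∫ q, Lb q ∂((μs j).restrict S)) + ∫ q, Lb q ∂((μs j).restrict Sᶜ) := by linarith
      _ = ∫ q, Lb q ∂(μs j) := integral_add_compl hSmeas (hμLb j)
  set a := ∫ q, Lb q ∂νlow with ha
  have hconva : Tendsto (fun i => ∫ q, Lb q ∂(τ (k i))) atTop (𝓝 a) := hτconv Lb hLbcont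
  have h1k : Tendsto (fun i => ∫ q, Lb q ∂(μs (k i))) atTop (𝓝 ρ) :=
    (h1.congr (fun j => hintLb j)).comp hktend
  have haρ : a ≤ ρ := le_of_tendsto_of_tendsto' hconva h1k (fun i => hLbτle (k i))
  set νhigh : Measure (EucV n × A) := νlow.map em with hνhighdef
  haveI hνhighp : IsProbabilityMeasure νhigh := Measure.isProbabilityMeasure_map hemm.aemeasurable
  have hνhighC : νhigh Cᶜ = 0 := by
    rw [hνhighdef, Measure.map_apply hemm hCcpt.isClosed.measurableSet.compl]
    refine measure_mono_null ?_ hνlowC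
    rintro ⟨x, α⟩ hq
    simp only [Set.mem_preimage, hemdef, Set.mem_compl_iff] at hq
    intro hqC
    exact hq ⟨hqC.1, hαsK₃⟩
  set b := ∫ q, Lb q ∂νhigh with hb
  have hbeq : b = ∫ q, Lb (em q) ∂νlow := by
    rw [hb, hνhighdef]
    exact integral_map hemm.aemeasurable hLbcont.aestronglyMeasurable
  have haeClow : ∀ᵐ q ∂νlow, q ∈ C := by
    rw [MeasureTheory.ae_iff]
    have : {q : EucV n × A | ¬ q ∈ C} = Cᶜ := rfl
    rw [this]
    exact hνlowC
  have hintemlow : Integrable (fun q => Lb (em q)) νlow := by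
    obtain ⟨R₁, hR₁⟩ := hbddLbem
    exact (integrable_const R₁).mono'
      ((hLbcont.comp (continuous_fst.prodMk continuous_const)).aestronglyMeasurable)
      (haeClow.mono (fun q hq => hR₁ q.1 hq.1))
  have hcase : a ≤ ρ ∧ (ρ ≤ b ∨ a = ρ) := by
    refine ⟨haρ, ?_⟩
    by_cases hex : ∃ α : A, α ∉ K₁
    · left
      have hαsnot : αs ∉ K₁ := by rw [hαs, dif_pos hex]; exact hex.choose_spec
      rw [hbeq]
      have hae : ∀ᵐ q ∂νlow, ρ ≤ Lb (em q) := by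
        refine haeClow.mono (fun q hq => ?_)
        have hq1 : q.1 ∈ closure Ω := hq.1
        have hge := hK₁ q.1 hq1 αs hαsnot
        have : Lb (em q) = L q.1 αs := hLbeq (q.1, αs) ⟨hq1, Set.mem_univ _⟩
        rw [this]
        exact hge
      calc ρ = ∫ (_ : EucV n × A), ρ ∂νlow := by simp
        _ ≤ _ := integral_mono_ae (integrable_const ρ) hintemlow hae
    · right
      have hK₃univ : K₃ = Set.univ := by
        apply Set.eq_univ_of_forall
        intro α
        push_neg at hex
        exact Or.inl (Or.inl (hex α))
      have hτeq : ∀ j, τ j = μs j := by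
        intro j
        rw [hτdef]
        simp only
        have hSuniv : S = Set.univ := by rw [hSdef, hK₃univ, Set.univ_prod_univ]
        rw [hSuniv, Set.compl_univ, Measure.restrict_univ, Measure.restrict_empty,
          Measure.map_zero, add_zero]
      exact tendsto_nhds_unique hconva (h1k.congr (fun i => by rw [hτeq (k i)]))
  set θ := if a = b then (1:ℝ) else (b - ρ)/(b - a) with hθdef
  have hθ : 0 ≤ θ ∧ θ ≤ 1 ∧ θ * a + (1 - θ) * b = ρ := by
    rcases hcase with ⟨hale, hor⟩
    by_cases hab : a = b
    · rw [hθdef, if_pos hab]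
      have haρ' : a = ρ := by
        rcases hor with h | h
        · exact le_antisymm hale (hab ▸ h)
        · exact h
      refine ⟨by norm_num, le_refl 1, ?_⟩
      rw [← hab]
      linarith
    · rw [hθdef, if_neg hab]
      rcases hor with h | h
      · have hlt : a < b := lt_of_le_of_ne (le_trans hale h) hab
        have hba : 0 < b - a := by linarith
        refine ⟨div_nonneg (by linarith) (le_of_lt hba), ?_, ?_⟩
        · rw [div_le_one hba]
          linarith
        · field_simp
          ring
      · have hone : (b - ρ)/(b - a) = 1 := by
          rw [← h]
          exact div_self (sub_ne_zero.mpr (Ne.symm hab))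
        rw [hone]
        refine ⟨by norm_num, le_refl 1, ?_⟩
        linarith
  set ν : Measure (EucV n × A) :=
    (ENNReal.ofReal θ) • νlow + (ENNReal.ofReal (1 - θ)) • νhigh with hνdef
  have hθ0 : 0 ≤ θ := hθ.1
  have hθ1 : θ ≤ 1 := hθ.2.1
  have hθρ : θ * a + (1 - θ) * b = ρ := hθ.2.2
  have h1θ0 : 0 ≤ 1 - θ := by linarith
  have hνp : IsProbabilityMeasure ν := by
    constructor
    rw [hνdef]
    simp only [Measure.coe_add, Measure.coe_smul, Pi.add_apply, Pi.smul_apply, smul_eq_mul]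
    rw [measure_univ, measure_univ, mul_one, mul_one, ← ENNReal.ofReal_add hθ0 h1θ0]
    norm_num
  have hνC : ν Cᶜ = 0 := by
    rw [hνdef]
    simp only [Measure.coe_add, Measure.coe_smul, Pi.add_apply, Pi.smul_apply, smul_eq_mul]
    rw [hνlowC, hνhighC, mul_zero, mul_zero, add_zero]
  have hνKcl : ν Kclᶜ = 0 := measure_mono_null (Set.compl_subset_compl.mpr hCKcl) hνC
  have haeKν : ∀ᵐ q ∂ν, q ∈ Kcl := haeK _ hνKcl
  have hcomb : ∀ h : EucV n × A → ℝ, Integrable h νlow → Integrable h νhigh →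
      ∫ q, h q ∂ν = θ * (∫ q, h q ∂νlow) + (1 - θ) * (∫ q, h q ∂νhigh) := by
    intro h hInt1 hInt2
    rw [hνdef, integral_add_measure (hInt1.smul_measure ENNReal.ofReal_ne_top)
      (hInt2.smul_measure ENNReal.ofReal_ne_top), integral_smul_measure, integral_smul_measure,
      ENNReal.toReal_ofReal hθ0, ENNReal.toReal_ofReal h1θ0, smul_eq_mul, smul_eq_mul]
  have hIntC : ∀ (m : Measure (EucV n × A)), IsProbabilityMeasure m → m Cᶜ = 0 →
      ∀ h : EucV n × A → ℝ, Continuous h → Integrable h m := by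
    intro m hm hmC h hcont
    haveI := hm
    obtain ⟨R, hR⟩ := hCcpt.exists_bound_of_continuousOn hcont.continuousOn
    have haeCm : ∀ᵐ q ∂m, q ∈ C := by
      rw [MeasureTheory.ae_iff]
      have : {q : EucV n × A | ¬ q ∈ C} = Cᶜ := rfl
      rw [this]
      exact hmC
    exact (integrable_const R).mono' hcont.aestronglyMeasurable
      (haeCm.mono fun q hq => hR q hq)
  have hLblow : Integrable Lb νlow := hIntC _ hνlowp hνlowC Lb hLbcont
  have hLbhigh : Integrable Lb νhigh := hIntC _ hνhighp hνhighC Lb hLbcont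
  have hintLbν : ∫ q, Lb q ∂ν = ρ := by
    rw [hcomb Lb hLblow hLbhigh, ← ha, ← hb]
    exact hθρ
  have hmaphigh : ∀ (Φ : EucV n → ℝ), Continuous Φ →
      ∫ q, Φ q.1 ∂νhigh = ∫ q, Φ q.1 ∂νlow := by
    intro Φ hΦ
    rw [hνhighdef, integral_map (f := fun q : EucV n × A => Φ q.1) hemm.aemeasurable
      ((hΦ.comp continuous_fst).aestronglyMeasurable)]
  have hfstν : ∀ (Φ : EucV n → ℝ), Continuous Φ → (∃ R, ∀ x, ‖Φ x‖ ≤ R) →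
      ∫ q, Φ q.1 ∂ν = ∫ q, Φ q.1 ∂νlow := by
    intro Φ hΦ hΦb
    rw [hcomb _ (hIntBdd νlow inferInstance Φ hΦ hΦb) (hIntBdd νhigh inferInstance Φ hΦ hΦb),
      hmaphigh Φ hΦ]
    ring
  have hmargconv : ∀ (ψ : EucV n → ℝ), ContinuousOn ψ (closure Ω) →
      Tendsto (fun i => ∫ q : EucV n × A, ψ q.1 ∂(μs (k i))) atTop
        (𝓝 (∫ q : EucV n × A, ψ q.1 ∂ν)) := by
    intro ψ hψ
    obtain ⟨Ψ, RΨ, hΨc, hΨb, hΨeq⟩ := SChelpers.exists_bdd_ext hcl hψ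
    have hae1 : ∀ (m : Measure (EucV n × A)), m Kclᶜ = 0 →
        ∫ q : EucV n × A, ψ q.1 ∂m = ∫ q : EucV n × A, Ψ q.1 ∂m := by
      intro m hm
      refine integral_congr_ae ((haeK _ hm).mono (fun q hq => ?_))
      simp only
      rw [hΨeq q.1 hq.1]
    have hconvΨ : Tendsto (fun i => ∫ q, Ψ q.1 ∂(τ (k i))) atTop
        (𝓝 (∫ q, Ψ q.1 ∂νlow)) := hτconv _ (hΨc.comp continuous_fst)
    have hseqeq : ∀ i, ∫ q : EucV n × A, ψ q.1 ∂(μs (k i)) = ∫ q, Ψ q.1 ∂(τ (k i)) := by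
      intro i
      rw [hae1 _ (hμsupp (k i)), ← hmarg (k i) Ψ hΨc ⟨RΨ, hΨb⟩]
    have hvaleq : ∫ q : EucV n × A, ψ q.1 ∂ν = ∫ q, Ψ q.1 ∂νlow := by
      rw [hae1 _ hνKcl, hfstν Ψ hΨc ⟨RΨ, hΨb⟩]
    rw [hvaleq]
    exact hconvΨ.congr (fun i => (hseqeq i).symm)
  refine ⟨ν, ⟨hνp, hνKcl⟩, ⟨?_, ?_⟩, ?_, k, hk, hmargconv⟩
  · exact (hIntC ν hνp hνC Lb hLbcont).congr (haeKν.mono (fun q hq => hLbeq q hq))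
  · intro t χ u hmem
    obtain ⟨ht, hχ, hu, hsub⟩ := hmem
    obtain ⟨Xb, RX, hXc, hXb, hXeq⟩ := SChelpers.exists_bdd_ext hcl hχ
    obtain ⟨Ub, RU, hUc, hUb, hUeq⟩ := SChelpers.exists_bdd_ext hcl hu
    have hlin : ∀ (m : Measure (EucV n × A)), IsProbabilityMeasure m → Integrable Lb m →
        ∀ β r : ℝ, ∫ q : EucV n × A, (t * Lb q + Xb q.1 + β * Ub q.1 - r) ∂m =
          t * (∫ q, Lb q ∂m) + (∫ q : EucV n × A, Xb q.1 ∂m) +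
            β * (∫ q : EucV n × A, Ub q.1 ∂m) - r := by
      intro m hm hLbm β r
      haveI := hm
      have hX : Integrable (fun q : EucV n × A => Xb q.1) m :=
        hIntBdd m inferInstance Xb hXc ⟨RX, hXb⟩
      have hU : Integrable (fun q : EucV n × A => Ub q.1) m :=
        hIntBdd m inferInstance Ub hUc ⟨RU, hUb⟩
      have hLt : Integrable (fun q : EucV n × A => t * Lb q) m := hLbm.const_mul t
      have hUβ : Integrable (fun q : EucV n × A => β * Ub q.1) m := hU.const_mul β
      have hs1 : Integrable (fun q : EucV n × A => t * Lb q + Xb q.1) m := hLt.add hX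
      have hs2 : Integrable (fun q : EucV n × A => t * Lb q + Xb q.1 + β * Ub q.1) m :=
        hs1.add hUβ
      rw [integral_sub hs2 (integrable_const r), integral_add hs1 hUβ, integral_add hLt hX,
        integral_const_mul, integral_const_mul, integral_const]
      simp [measure_univ]
    have hmemj : ∀ j, memFS Ω F (lams j) t (fun x => χ x + (lams j - lam) * u x) u := by
      intro j
      refine ⟨ht, hχ.add (continuousOn_const.mul hu), hu, ?_⟩
      intro ϕ hϕ x hx hmax
      have h0 := hsub ϕ hϕ x hx hmax
      simp only [Fphi] at h0 ⊢
      have hw : lams j * u x +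
          (t * F x (t⁻¹ • gradV ϕ x) (t⁻¹ • hessM ϕ x) - (χ x + (lams j - lam) * u x)) =
          lam * u x + (t * F x (t⁻¹ • gradV ϕ x) (t⁻¹ • hessM ϕ x) - χ x) := by ring
      rw [hw]
      exact h0
    have hdual : ∀ j, 0 ≤ t * (∫ q, Lb q ∂(μs j)) + (∫ q : EucV n × A, Xb q.1 ∂(μs j)) +
        (lams j - lam) * (∫ q : EucV n × A, Ub q.1 ∂(μs j)) - lams j * u z := by
      intro j
      haveI := hμp j
      have h0 := (hμs j).2.2 t (fun x => χ x + (lams j - lam) * u x) u (hmemj j)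
      have hcongr : ∫ q : EucV n × A,
          (t * L q.1 q.2 + (fun x => χ x + (lams j - lam) * u x) q.1 - lams j * u z) ∂(μs j) =
          ∫ q : EucV n × A,
            (t * Lb q + Xb q.1 + (lams j - lam) * Ub q.1 - lams j * u z) ∂(μs j) := by
        refine integral_congr_ae ((haeK _ (hμsupp j)).mono (fun q hq => ?_))
        simp only
        rw [hLbeq q hq, hXeq q.1 hq.1, hUeq q.1 hq.1]
        ring
      rw [hcongr, hlin (μs j) (hμp j) (hμLb j) (lams j - lam) (lams j * u z)] at h0
      exact h0
    have hXconv : Tendsto (fun i => ∫ q : EucV n × A, Xb q.1 ∂(μs (k i))) atTop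
        (𝓝 (∫ q : EucV n × A, Xb q.1 ∂νlow)) := by
      have := hτconv (fun q : EucV n × A => Xb q.1) (hXc.comp continuous_fst)
      exact this.congr (fun i => hmarg (k i) Xb hXc ⟨RX, hXb⟩)
    have hUbdd : ∀ i, ‖∫ q : EucV n × A, Ub q.1 ∂(μs (k i))‖ ≤ RU := by
      intro i
      haveI := hμp (k i)
      calc ‖∫ q : EucV n × A, Ub q.1 ∂(μs (k i))‖
          ≤ RU * ((μs (k i)) Set.univ).toReal :=
            norm_integral_le_of_norm_le_const
              (Filter.Eventually.of_forall (fun q => hUb q.1))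
        _ = RU := by simp [measure_univ]
    have hlamconv : Tendsto (fun i => lams (k i)) atTop (𝓝 lam) := h2.comp hktend
    have hUconv : Tendsto
        (fun i => (lams (k i) - lam) * (∫ q : EucV n × A, Ub q.1 ∂(μs (k i)))) atTop (𝓝 0) := by
      have h3 : Tendsto (fun i => lams (k i) - lam) atTop (𝓝 0) := by
        have := hlamconv.sub (tendsto_const_nhds (x := lam))
        simpa using this
      refine squeeze_zero_norm (a := fun i => |lams (k i) - lam| * RU) (fun i => ?_) ?_
      · show ‖(lams (k i) - lam) * (∫ q : EucV n × A, Ub q.1 ∂(μs (k i)))‖ ≤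
          |lams (k i) - lam| * RU
        rw [norm_mul]
        exact mul_le_mul_of_nonneg_left (hUbdd i) (abs_nonneg _)
      · have := (h3.abs).mul_const RU
        simpa using this
    have hRHSconv : Tendsto (fun i =>
        t * (∫ q, Lb q ∂(μs (k i))) + (∫ q : EucV n × A, Xb q.1 ∂(μs (k i))) +
          (lams (k i) - lam) * (∫ q : EucV n × A, Ub q.1 ∂(μs (k i))) - lams (k i) * u z) atTop
        (𝓝 (t * ρ + (∫ q : EucV n × A, Xb q.1 ∂νlow) + 0 - lam * u z)) :=
      (((h1k.const_mul t).add hXconv).add hUconv).sub (hlamconv.mul_const (u z))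
    have hQ : 0 ≤ t * ρ + (∫ q : EucV n × A, Xb q.1 ∂νlow) + 0 - lam * u z :=
      ge_of_tendsto hRHSconv (Filter.Eventually.of_forall (fun i => hdual (k i)))
    have hgoal : ∫ q : EucV n × A, (t * L q.1 q.2 + χ q.1 - lam * u z) ∂ν =
        t * ρ + (∫ q : EucV n × A, Xb q.1 ∂νlow) + 0 - lam * u z := by
      have hcongr : ∫ q : EucV n × A, (t * L q.1 q.2 + χ q.1 - lam * u z) ∂ν =
          ∫ q : EucV n × A, (t * Lb q + Xb q.1 + 0 * Ub q.1 - lam * u z) ∂ν := by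
        refine integral_congr_ae (haeKν.mono (fun q hq => ?_))
        simp only
        rw [hLbeq q hq, hXeq q.1 hq.1]
        ring
      rw [hcongr, hlin ν hνp (hIntC ν hνp hνC Lb hLbcont) 0 (lam * u z), hintLbν,
        hfstν Xb hXc ⟨RX, hXb⟩]
      ring
    rw [hgoal]
    exact hQ
  · have : intL L ν = ∫ q, Lb q ∂ν :=
      integral_congr_ae (haeKν.mono (fun q hq => (hLbeq q hq).symm))
    rw [this, hintLbν]
end

section
/- Assume (F1), (F2), (CPS), (SLS), (EC) and (Z). For each λ > 0 let v^λ ∈ C(Ω̄) be the unique solution of the state constraint problem (S_λ). Then the family {v^λ}_{λ>0} is uniformly bounded on Ω̄: there is a constant C (one may take C = 2‖u‖_{C(Ω̄)} for any solution u ∈ C(Ω̄) of (ES_0)) such that ‖v^λ‖_{C(Ω̄)} ≤ C for all λ > 0. -/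
open MeasureTheory Filter Topology Set

/-- Lemma 3.7: under (Z), the family of solutions of the state constraint problems
(S_λ), λ > 0, is uniformly bounded on `Ω̄`. -/
theorem stmt7 {n : ℕ} {A : Type*} [MetricSpace A] [Nonempty A]
    [SigmaCompactSpace A] [LocallyCompactSpace A]
    (Ω : Set (EucV n)) (hΩ : BoundedDomain Ω)
    (a : EucV n → A → Matrix (Fin n) (Fin n) ℝ) (b : EucV n → A → EucV n)
    (L : EucV n → A → ℝ) (F : Op n)
    (hdata : CondData Ω a b L) (hF1 : CondF1 Ω a b L F) (hF2 : CondF2 Ω F)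
    (hCPS : CondCPS Ω F)
    (vfam : ℝ → EucV n → ℝ) (hSLS : CondSLS Ω F vfam) (hEC : CondEC Ω vfam)
    (hZ : ∃ u : EucV n → ℝ, ContinuousOn u (closure Ω) ∧ SolES Ω F 0 u) :
    ∃ C : ℝ, ∀ lam : ℝ, 0 < lam → ∀ x ∈ closure Ω, |vfam lam x| ≤ C := by
  obtain ⟨u, hu_cont, hu_sub, hu_super⟩ := hZ
  -- closure Ω is compact and nonempty
  have hcomp : IsCompact (closure Ω) :=
    Metric.isCompact_of_isClosed_isBounded isClosed_closure hΩ.2.2.closure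
  obtain ⟨M, hM⟩ := hcomp.exists_bound_of_continuousOn hu_cont
  refine ⟨2 * M, fun lam hlam x hx => ?_⟩
  obtain ⟨hv_cont, hv_sub, hv_super⟩ := hSLS lam hlam
  -- u - M is a subsolution of lam w + F[w] = 0 in Ω
  have hsub : SubsolOn (closure Ω) Ω lam F (fun _ => 0) (fun y => u y - M) := by
    intro ϕ hϕ y hy hmax
    have hmax' : IsLocalMaxOn (fun z => u z - ϕ z) (closure Ω) y :=
      hmax.mono fun z hz => by show u z - ϕ z ≤ u y - ϕ y; have : u z - M - ϕ z ≤ u y - M - ϕ y := hz; linarith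
    have h1 := hu_sub ϕ hϕ y hy hmax'
    have h2 : |u y| ≤ M := hM y (subset_closure hy)
    have h3 : u y ≤ M := (abs_le.mp h2).2
    have h4 : lam * (u y - M) ≤ 0 :=
      mul_nonpos_of_nonneg_of_nonpos hlam.le (by linarith)
    simp only [zero_mul, zero_add] at h1
    simpa using by linarith
  -- u + M is a supersolution of lam w + F[w] = 0 on closure Ω
  have hsuper : SupersolOn (closure Ω) (closure Ω) lam F (fun _ => 0) (fun y => u y + M) := by
    intro ϕ hϕ y hy hmin
    have hmin' : IsLocalMinOn (fun z => u z - ϕ z) (closure Ω) y :=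
      hmin.mono fun z hz => by show u y - ϕ y ≤ u z - ϕ z; have : u y + M - ϕ y ≤ u z + M - ϕ z := hz; linarith
    have h1 := hu_super ϕ hϕ y hy hmin'
    have h2 : |u y| ≤ M := hM y hy
    have h3 : -M ≤ u y := (abs_le.mp h2).1
    have h4 : 0 ≤ lam * (u y + M) :=
      mul_nonneg hlam.le (by linarith)
    simp only [zero_mul, zero_add] at h1
    simpa using by linarith
  have hc1 : ContinuousOn (fun y => u y - M) (closure Ω) := hu_cont.sub continuousOn_const
  have hc2 : ContinuousOn (fun y => u y + M) (closure Ω) := hu_cont.add continuousOn_const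
  have hlow := hCPS lam hlam (fun y => u y - M) (vfam lam) hc1 hv_cont hsub hv_super x hx
  have hhigh := hCPS lam hlam (vfam lam) (fun y => u y + M) hv_cont hc2 hv_sub hsuper x hx
  have hux : |u x| ≤ M := hM x hx
  obtain ⟨h5, h6⟩ := abs_le.mp hux
  rw [abs_le]
  constructor <;> linarith
end

section
/- Assume (F1), (F2), (CPD) and (SLD), and for λ > 0 let v^λ ∈ C(Ω̄) be the solution of the Dirichlet problem (D_λ). Then: (i) if the ergodic Dirichlet problem (ED_0) has a solution in C(Ω̄), then λ v^λ → 0 uniformly on Ω̄ as λ → 0+; (ii) if the state constraint ergodic problem (ES_c) with some c > 0 has a solution in C(Ω̄), then λ v^λ → −c uniformly on Ω̄ as λ → 0+. -/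
open MeasureTheory Filter Topology Set

lemma shiftMax' {n : ℕ} {D : Set (EucV n)} {x : EucV n} {f ϕ : EucV n → ℝ} {k : ℝ}
    (h : IsLocalMaxOn (fun y => (f y + k) - ϕ y) D x) :
    IsLocalMaxOn (fun y => f y - ϕ y) D x := by
  have h' : ∀ᶠ y in nhdsWithin x D, (f y + k) - ϕ y ≤ (f x + k) - ϕ x := h
  exact h'.mono fun y hy => by dsimp only; linarith

lemma shiftMin' {n : ℕ} {D : Set (EucV n)} {x : EucV n} {f ϕ : EucV n → ℝ} {k : ℝ}
    (h : IsLocalMinOn (fun y => (f y + k) - ϕ y) D x) :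
    IsLocalMinOn (fun y => f y - ϕ y) D x := by
  have h' : ∀ᶠ y in nhdsWithin x D, (f x + k) - ϕ x ≤ (f y + k) - ϕ y := h
  exact h'.mono fun y hy => by dsimp only; linarith

/-- Proposition 4.1: behaviour of `λ v^λ` for the Dirichlet problem as `λ → 0+`:
(i) it tends to `0` uniformly if (ED_0) is solvable;
(ii) it tends to `−c` uniformly if (ES_c), `c > 0`, is solvable. -/
theorem stmt9 {n : ℕ} {A : Type*} [MetricSpace A] [Nonempty A]
    [SigmaCompactSpace A] [LocallyCompactSpace A]
    (Ω : Set (EucV n)) (hΩ : BoundedDomain Ω)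
    (a : EucV n → A → Matrix (Fin n) (Fin n) ℝ) (b : EucV n → A → EucV n)
    (L : EucV n → A → ℝ) (F : Op n)
    (hdata : CondData Ω a b L) (hF1 : CondF1 Ω a b L F) (hF2 : CondF2 Ω F)
    (g : EucV n → ℝ) (hg : ContinuousOn g (frontier Ω))
    (hCPD : CondCPD Ω F)
    (vfam : ℝ → EucV n → ℝ) (hSLD : CondSLD Ω F g vfam) :
    ((∃ u : EucV n → ℝ, ContinuousOn u (closure Ω) ∧ SolED Ω F g 0 u) →
      ∀ ε : ℝ, 0 < ε → ∃ δ : ℝ, 0 < δ ∧ ∀ lam : ℝ, 0 < lam → lam < δ →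
        ∀ x ∈ closure Ω, |lam * vfam lam x| < ε) ∧
    (∀ c : ℝ, 0 < c →
      (∃ u : EucV n → ℝ, ContinuousOn u (closure Ω) ∧ SolES Ω F c u) →
      ∀ ε : ℝ, 0 < ε → ∃ δ : ℝ, 0 < δ ∧ ∀ lam : ℝ, 0 < lam → lam < δ →
        ∀ x ∈ closure Ω, |lam * vfam lam x + c| < ε) := by
  obtain ⟨hOpen, hConn, hBdd⟩ := hΩ
  have hKc : IsCompact (closure Ω) :=
    Metric.isCompact_of_isClosed_isBounded isClosed_closure hBdd.closure
  have hKne : (closure Ω).Nonempty := hConn.nonempty.closure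
  constructor
  · -- Part (i)
    rintro ⟨u, hu, ⟨husub, hubd⟩, husup⟩ ε hε
    obtain ⟨x0, hx0, hM0⟩ := hKc.exists_isMaxOn hKne hu.abs
    set M := |u x0| with hMdef
    have hMnn : 0 ≤ M := abs_nonneg _
    refine ⟨ε / (2 * M + 1), by positivity, fun lam hlam hlamδ x hx => ?_⟩
    obtain ⟨hvcont, ⟨hvsub, hvbd⟩, hvsup⟩ := hSLD lam hlam
    have hlow : ∀ x ∈ closure Ω, u x - M ≤ vfam lam x := by
      refine hCPD lam hlam (fun _ => 0) g continuousOn_const hg (fun y => u y - M) (vfam lam)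
        (hu.sub continuousOn_const) hvcont ⟨?_, ?_⟩ hvsup
      · intro ϕ hϕ y hy hmax
        have hmax' : IsLocalMaxOn (fun z => u z - ϕ z) (closure Ω) y := by
          apply shiftMax' (k := -M)
          convert hmax using 2 with z
          dsimp only; ring
        have h1 := husub ϕ hϕ y hy hmax'
        simp only at h1 ⊢
        have h3 : u y ≤ M := (abs_le.mp (hM0 (subset_closure hy))).2
        nlinarith [mul_nonneg hlam.le (sub_nonneg.2 h3)]
      · intro y hy
        have := hubd y hy
        dsimp only
        linarith
    have hupp : ∀ x ∈ closure Ω, vfam lam x ≤ u x + M := by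
      refine hCPD lam hlam (fun _ => 0) g continuousOn_const hg (vfam lam) (fun y => u y + M)
        hvcont (hu.add continuousOn_const) ⟨hvsub, hvbd⟩ ?_
      intro ϕ hϕ y hy hmin
      have hmin' : IsLocalMinOn (fun z => u z - ϕ z) (closure Ω) y := by
        apply shiftMin' (k := M)
        convert hmin using 2 with z
      obtain ⟨hint, hbdy⟩ := husup ϕ hϕ y hy hmin'
      have h3 : -M ≤ u y := (abs_le.mp (hM0 hy)).1
      constructor
      · intro hyΩ
        have h1 := hint hyΩ
        simp only at h1 ⊢
        nlinarith [mul_nonneg hlam.le (show (0:ℝ) ≤ u y + M by linarith)]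
      · intro hyfr
        rcases hbdy hyfr with h | h
        · left
          simp only at h ⊢
          nlinarith [mul_nonneg hlam.le (show (0:ℝ) ≤ u y + M by linarith)]
        · right
          dsimp only
          linarith
    have h1 := hlow x hx
    have h2 := hupp x hx
    have h3 := abs_le.mp (show |u x| ≤ M from hM0 hx)
    rw [abs_lt]
    have hkey : lam * (2 * M + 1) < ε := by
      have := mul_lt_mul_of_pos_right hlamδ (show (0:ℝ) < 2 * M + 1 by linarith)
      rwa [div_mul_cancel₀ _ (by linarith : (2:ℝ) * M + 1 ≠ 0)] at this
    constructor
    · nlinarith [mul_le_mul_of_nonneg_left (show -(2 * M + 1) ≤ vfam lam x by linarith) hlam.le]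
    · nlinarith [mul_le_mul_of_nonneg_left (show vfam lam x ≤ 2 * M + 1 by linarith) hlam.le]
  · -- Part (ii)
    rintro c hc ⟨u, hu, husub, husup⟩ ε hε
    obtain ⟨x0, hx0, hM0⟩ := hKc.exists_isMaxOn hKne hu.abs
    set M := |u x0| with hMdef
    have hMnn : 0 ≤ M := abs_nonneg _
    obtain ⟨C, hCM, hC⟩ : ∃ C, M ≤ C ∧ ∀ x ∈ frontier Ω, u x - g x ≤ C := by
      rcases (frontier Ω).eq_empty_or_nonempty with h | h
      · exact ⟨M, le_refl M, by simp [h]⟩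
      · have hfrc : IsCompact (frontier Ω) :=
          Metric.isCompact_of_isClosed_isBounded isClosed_frontier
            (hBdd.closure.subset frontier_subset_closure)
        obtain ⟨y0, hy0, hb⟩ :=
          hfrc.exists_isMaxOn h ((hu.mono frontier_subset_closure).sub hg)
        exact ⟨max M (u y0 - g y0), le_max_left _ _,
          fun x hxf => le_trans (hb hxf) (le_max_right _ _)⟩
    have hCnn : 0 ≤ C := le_trans hMnn hCM
    refine ⟨ε / (2 * M + C + 1), div_pos hε (by linarith), fun lam hlam hlamδ x hx => ?_⟩
    obtain ⟨hvcont, ⟨hvsub, hvbd⟩, hvsup⟩ := hSLD lam hlam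
    have hcl : lam * (c / lam) = c := by field_simp
    have hupp : ∀ x ∈ closure Ω, vfam lam x ≤ u x + M - c / lam := by
      refine hCPD lam hlam (fun _ => 0) g continuousOn_const hg (vfam lam)
        (fun y => u y + M - c / lam) hvcont ((hu.add continuousOn_const).sub continuousOn_const)
        ⟨hvsub, hvbd⟩ ?_
      intro ϕ hϕ y hy hmin
      have hmin' : IsLocalMinOn (fun z => u z - ϕ z) (closure Ω) y := by
        apply shiftMin' (k := M - c / lam)
        convert hmin using 2 with z
        ring
      have h1 := husup ϕ hϕ y hy hmin'
      simp only at h1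
      have h3 : -M ≤ u y := (abs_le.mp (hM0 hy)).1
      have hexp : lam * (u y + M - c / lam) = lam * (u y + M) - c := by
        rw [mul_sub, hcl]
      constructor
      · intro hyΩ
        simp only
        nlinarith [mul_nonneg hlam.le (show (0:ℝ) ≤ u y + M by linarith)]
      · intro hyfr
        left
        simp only
        nlinarith [mul_nonneg hlam.le (show (0:ℝ) ≤ u y + M by linarith)]
    have hlow : ∀ x ∈ closure Ω, u x - c / lam - C ≤ vfam lam x := by
      refine hCPD lam hlam (fun _ => 0) g continuousOn_const hg
        (fun y => u y - c / lam - C) (vfam lam)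
        ((hu.sub continuousOn_const).sub continuousOn_const) hvcont ⟨?_, ?_⟩ hvsup
      · intro ϕ hϕ y hy hmax
        have hmax' : IsLocalMaxOn (fun z => u z - ϕ z) (closure Ω) y := by
          apply shiftMax' (k := -(c / lam) - C)
          convert hmax using 2 with z
          ring
        have h1 := husub ϕ hϕ y hy hmax'
        simp only at h1 ⊢
        have h3 : u y ≤ M := (abs_le.mp (hM0 (subset_closure hy))).2
        have hexp : lam * (u y - c / lam - C) = lam * (u y - C) - c := by
          rw [show u y - c / lam - C = (u y - C) - c / lam by ring, mul_sub, hcl]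
        nlinarith [mul_nonneg hlam.le (sub_nonneg.2 (le_trans h3 hCM))]
      · intro y hy
        have h4 := hC y hy
        have h5 : 0 < c / lam := div_pos hc hlam
        dsimp only
        linarith
    have h1 := hlow x hx
    have h2 := hupp x hx
    have h3 := abs_le.mp (show |u x| ≤ M from hM0 hx)
    rw [abs_lt]
    have hkey : lam * (2 * M + C + 1) < ε := by
      have := mul_lt_mul_of_pos_right hlamδ (show (0:ℝ) < 2 * M + C + 1 by linarith)
      rwa [div_mul_cancel₀ _ (by linarith : (2:ℝ) * M + C + 1 ≠ 0)] at this
    have e1 : lam * (u x - c / lam - C) = lam * (u x - C) - c := by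
      rw [show u x - c / lam - C = (u x - C) - c / lam by ring, mul_sub, hcl]
    have e2 : lam * (u x + M - c / lam) = lam * (u x + M) - c := by
      rw [mul_sub, hcl]
    have hm1 : lam * (u x - c / lam - C) ≤ lam * vfam lam x :=
      mul_le_mul_of_nonneg_left h1 hlam.le
    have hm2 : lam * vfam lam x ≤ lam * (u x + M - c / lam) :=
      mul_le_mul_of_nonneg_left h2 hlam.le
    constructor
    · nlinarith [mul_le_mul_of_nonneg_left (show -(2 * M + C + 1) ≤ u x - C by linarith) hlam.le]
    · nlinarith [mul_le_mul_of_nonneg_left (show u x + M ≤ 2 * M + C + 1 by linarith) hlam.le]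
end
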